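/- arXiv:2504.11666 — 6 statements merged into one kernel-verified Lean document; each statement's English description precedes it below -/
import Mathlib

section
/- Let q be an odd prime. (i) Every element of ℤ[ζ_q] is congruent modulo (1−ζ_q)^q to exactly one element of the form a₀ + a₁(1−ζ_q) + ⋯ + a_{q−2}(1−ζ_q)^{q−2} with integers 0 ≤ a₀ < q² and 0 ≤ a₁, …, a_{q−2} < q. (ii) For such a representative, there exists ξ ∈ ℤ[ζ_q] with a₀ + a₁(1−ζ_q) + ⋯ + a_{q−2}(1−ζ_q)^{q−2} ≡ ξ^q (mod (1−ζ_q)^q) if and only if a₁ = ⋯ = a_{q−2} = 0 and a₀ ≡ b^q (mod q²) for some b ∈ ℤ. -/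
/-! Write `λ = 1 - ζ`. Three facts about `λ` in `ℤ[ζ]` carry the argument: every element is an
integer modulo `λ`, `q` is `λ ^ (q - 1)` times a unit, and `ℤ ∩ λℤ[ζ] = qℤ`. Iterating the first
gives `λ`-adic expansions with integer digits. Since `qλ` and `q²` vanish modulo `λ ^ q`, modulo
`λ ^ q` the constant digit only matters modulo `q²` and the others modulo `q`; the last two facts
show, digit by digit, that these reduced digits are determined. For (ii), writing `ξ = c + λt`,
the binomial theorem gives `ξ ^ q ≡ c ^ q` modulo `qλ`, hence modulo `λ ^ q`, and the reduced
expansion of the integer `c ^ q` is its residue modulo `q²`. -/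

open Finset Polynomial

/-- `Li s` is the polylogarithm of negative index, `Li_{-s}(x) = (x d/dx)^s (x/(1-x))`,
viewed as a function `ℚ → ℚ` (well defined away from `x = 1`). -/
noncomputable def Li (s : ℕ) : ℚ → ℚ :=
  (fun f x => x * deriv f x)^[s] (fun x => x / (1 - x))

/-- `zLocSpan q c x` means `x ∈ c·ℤ_(q)`, i.e. `x = c·(a/b)` with `q ∤ b`. -/
def zLocSpan (q : ℕ) (c x : ℚ) : Prop :=
  ∃ a b : ℤ, ¬ (q : ℤ) ∣ b ∧ x * (b : ℚ) = c * (a : ℚ)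

/-- The integer coefficient `Σ_{1≤j,k,l≤q−1, k ≡ jl (mod q)} (−1)^k C(t,k)·j·l`. -/
def fqCoeff (q t : ℕ) : ℤ :=
  ∑ j ∈ Finset.Icc 1 (q-1), ∑ k ∈ Finset.Icc 1 (q-1), ∑ l ∈ Finset.Icc 1 (q-1),
    if (k : ZMod q) = (j : ZMod q) * (l : ZMod q) then (-1)^k * (t.choose k : ℤ) * j * l else 0

/-- The polynomial `f_q(x) = Σ_{t=1}^q fqCoeff q t · x^t / t ∈ ℚ[x]` (in fact in `ℤ_(q)[x]`). -/
noncomputable def fqPoly (q : ℕ) : Polynomial ℚ :=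
  ∑ t ∈ Finset.Icc 1 q, Polynomial.C ((fqCoeff q t : ℚ) / (t : ℚ)) * Polynomial.X ^ t

/-- Reduction of a rational with denominator prime to `N` to `ZMod N`. -/
def ratToZMod (N : ℕ) (x : ℚ) : ZMod N := (x.num : ZMod N) * ((x.den : ℕ) : ZMod N)⁻¹

/-- The set `S_q = { a − f_q(a) mod q² : a = 0,…,q−1 } ⊆ ℤ/q²ℤ`. -/
def Sq (q : ℕ) : Set (ZMod (q^2)) :=
  { y | ∃ a : ℕ, a < q ∧ y = ratToZMod (q^2) ((a : ℚ) - (fqPoly q).eval (a : ℚ)) }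

/-- Congruence modulo the ideal of `ℤ[ζ]` generated by `(1-ζ)^e`, for elements of `ℂ`. -/
def congZeta (ζ : ℂ) (e : ℕ) (x y : ℂ) : Prop :=
  ∃ P : Polynomial ℤ, x - y = (1 - ζ)^e * (Polynomial.aeval ζ P)

/-- `jstar q j` is the representative in `[0, q-1]` of the inverse of `j` mod `q`. -/
def jstar (q j : ℕ) : ℕ := ((j : ZMod q)⁻¹).val

/-- `istar q a` is the representative in `[0, q-1]` of the inverse of the integer `a` mod `q`. -/
def istar (q : ℕ) (a : ℤ) : ℕ := ((a : ZMod q)⁻¹).val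

/-- `μ^{(i)} = ζ^i · ∏_{j=1}^{q−1} (m − n ζ^j)^{j*} ∈ ℤ[ζ_q] ⊆ ℂ`. -/
noncomputable def mu (q : ℕ) (m n : ℤ) (i : ℕ) (ζ : ℂ) : ℂ :=
  ζ^i * ∏ j ∈ Finset.Icc 1 (q-1), ((m : ℂ) - (n : ℂ) * ζ^j)^(jstar q j)

/-- `𝓕_s(x) = Σ_{t=0}^s Σ_{s₁,…,s_t ≥ 1, s₁+⋯+s_t=s} s!/(s₁!⋯s_t!) x^t`, as a function `ℚ → ℚ`. -/
def Fcal (s : ℕ) (x : ℚ) : ℚ :=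
  ∑ t ∈ Finset.range (s+1),
    ∑ c ∈ (Finset.Nat.antidiagonalTuple t s).filter (fun c => ∀ i, 1 ≤ c i),
      (Nat.multinomial Finset.univ c : ℚ) * x ^ t

/-- Coefficientwise reduction of `f_q` mod `q²`. -/
noncomputable def fqBar (q : ℕ) : Polynomial (ZMod (q^2)) :=
  ∑ t ∈ Finset.Icc 1 q,
    Polynomial.C (ratToZMod (q^2) ((fqCoeff q t : ℚ) / (t : ℚ))) * Polynomial.X ^ t

section Uniformizer

variable {R : Type*} [CommRing R]

/-- `π` plays the role of `1 - ζ` in `ℤ[ζ]`, `ζ` a primitive `p`-th root of unity: it generates a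
prime over `p` that is totally ramified, with residue field the image of `ℤ`. -/
structure IsTotallyRamifiedUniformizer (π : R) (p : ℕ) : Prop where
  ne_zero : π ≠ 0
  exists_dvd_sub_intCast : ∀ r : R, ∃ n : ℤ, π ∣ r - n
  associated_pow : Associated (π ^ (p - 1)) (p : R)
  intCast_dvd_of_dvd : ∀ n : ℤ, π ∣ (n : R) → (p : ℤ) ∣ n

def digitModulus (p k : ℕ) : ℕ := if k = 0 then p ^ 2 else p

def IsReducedDigits (p : ℕ) (a : ℕ → ℕ) : Prop := ∀ k < p - 1, a k < digitModulus p k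

theorem isReducedDigits_iff {p : ℕ} (hp : 2 ≤ p) {a : ℕ → ℕ} :
    IsReducedDigits p a ↔ a 0 < p ^ 2 ∧ ∀ k, 1 ≤ k → k ≤ p - 2 → a k < p := by
  refine ⟨fun h => ⟨h 0 (by omega), fun k hk hk' => ?_⟩, fun ⟨h0, h⟩ k hk => ?_⟩
  · simpa [digitModulus, show k ≠ 0 by omega] using h k (by omega)
  · rcases k.eq_zero_or_pos with rfl | hk0
    · simpa [digitModulus] using h0
    · simpa [digitModulus, hk0.ne'] using h k hk0 (by omega)

theorem sum_range_eq_of_forall_pos_eq_zero (π : R) {n : ℕ} (hn : 0 < n) {a : ℕ → ℕ}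
    (ha : ∀ k, 0 < k → k < n → a k = 0) : ∑ k ∈ range n, (a k : R) * π ^ k = a 0 := by
  rw [sum_eq_single_of_mem 0 (mem_range.2 hn) fun k hk hk0 => by
    simp [ha k (Nat.pos_of_ne_zero hk0) (mem_range.1 hk)]]
  simp

theorem Nat.eq_of_natCast_dvd_sub {m x y : ℕ} (h : (m : ℤ) ∣ x - y) (hx : x < m) (hy : y < m) :
    x = y :=
  ((Nat.modEq_iff_dvd.2 h).eq_of_lt_of_lt hy hx).symm

namespace IsTotallyRamifiedUniformizer

variable {π : R} {p : ℕ}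

theorem pow_dvd_natCast_mul_pow (h : IsTotallyRamifiedUniformizer π p) {k : ℕ} (hk : 1 ≤ k) :
    π ^ p ∣ (p : R) * π ^ k :=
  calc π ^ p ∣ π ^ (p - 1) * π ^ k := by rw [← pow_add]; exact pow_dvd_pow π (by omega)
    _ ∣ (p : R) * π ^ k := mul_dvd_mul_right h.associated_pow.dvd _

theorem pow_dvd_natCast_sq (h : IsTotallyRamifiedUniformizer π p) (hp : 2 ≤ p) :
    π ^ p ∣ (p : R) ^ 2 :=
  calc π ^ p ∣ (π ^ (p - 1)) ^ 2 := by rw [← pow_mul]; exact pow_dvd_pow π (by omega)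
    _ ∣ (p : R) ^ 2 := pow_dvd_pow_of_dvd h.associated_pow.dvd 2

theorem pow_dvd_digitModulus_mul_pow (h : IsTotallyRamifiedUniformizer π p) (hp : 2 ≤ p)
    (k : ℕ) : π ^ p ∣ (digitModulus p k : R) * π ^ k := by
  rcases k.eq_zero_or_pos with rfl | hk
  · simpa [digitModulus] using h.pow_dvd_natCast_sq hp
  · simpa [digitModulus, hk.ne'] using h.pow_dvd_natCast_mul_pow hk

theorem pow_dvd_intCast_of_sq_dvd (h : IsTotallyRamifiedUniformizer π p) (hp : 2 ≤ p) {n : ℤ}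
    (hn : (p : ℤ) ^ 2 ∣ n) : π ^ p ∣ (n : R) := by
  obtain ⟨m, rfl⟩ := hn
  push_cast
  exact dvd_mul_of_dvd_left (h.pow_dvd_natCast_sq hp) _

theorem pow_sub_one_dvd_intCast_of_dvd (h : IsTotallyRamifiedUniformizer π p) {n : ℤ}
    (hn : π ∣ (n : R)) : π ^ (p - 1) ∣ (n : R) := by
  obtain ⟨m, rfl⟩ := h.intCast_dvd_of_dvd n hn
  push_cast
  exact dvd_mul_of_dvd_left h.associated_pow.dvd _

theorem sq_dvd_of_pow_dvd_intCast [IsDomain R] (h : IsTotallyRamifiedUniformizer π p)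
    (hp : 1 ≤ p) {n : ℤ} (hn : π ^ p ∣ (n : R)) : (p : ℤ) ^ 2 ∣ n := by
  obtain ⟨m, rfl⟩ := h.intCast_dvd_of_dvd n ((dvd_pow_self π (by omega)).trans hn)
  obtain ⟨u, hu⟩ := h.associated_pow
  have hm : π ∣ (m : R) := by
    rwa [Int.cast_mul, Int.cast_natCast, ← hu, ← Nat.sub_add_cancel hp, pow_succ, mul_assoc,
      Nat.add_sub_cancel, mul_dvd_mul_iff_left (pow_ne_zero _ h.ne_zero),
      Units.dvd_mul_left] at hn
  rw [sq]
  exact mul_dvd_mul_left _ (h.intCast_dvd_of_dvd m hm)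

theorem intCast_dvd_of_pow_dvd_sum [IsDomain R] (h : IsTotallyRamifiedUniformizer π p) {m : ℕ}
    (hm : m ≤ p - 1) {d : ℕ → ℤ} (hd : π ^ m ∣ ∑ k ∈ range m, (d k : R) * π ^ k) :
    ∀ k < m, (p : ℤ) ∣ d k := by
  induction m generalizing d with
  | zero => simp
  | succ m ih =>
    set S := ∑ k ∈ range m, (d (k + 1) : R) * π ^ k
    have hsum : ∑ k ∈ range (m + 1), (d k : R) * π ^ k = π * S + d 0 := by
      simp only [sum_range_succ', pow_zero, mul_one, S, mul_sum, pow_succ]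
      congr 1
      exact sum_congr rfl fun k _ => by ring
    rw [hsum] at hd
    have h0 : π ∣ (d 0 : R) :=
      (dvd_add_right (dvd_mul_right π S)).1 ((dvd_pow_self π m.succ_ne_zero).trans hd)
    have hS : π ^ m ∣ S := by
      have h0' := (pow_dvd_pow π hm).trans (h.pow_sub_one_dvd_intCast_of_dvd h0)
      rwa [dvd_add_left h0', pow_succ', mul_dvd_mul_iff_left h.ne_zero] at hd
    rintro (_ | k) hk
    · exact h.intCast_dvd_of_dvd _ h0
    · exact ih (by omega) hS k (by omega)

theorem eq_of_pow_dvd_sum_sub_sum [IsDomain R] (h : IsTotallyRamifiedUniformizer π p)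
    (hp : 2 ≤ p) {a b : ℕ → ℕ} (ha : IsReducedDigits p a) (hb : IsReducedDigits p b)
    (hab : π ^ p ∣
      ∑ k ∈ range (p - 1), (a k : R) * π ^ k - ∑ k ∈ range (p - 1), (b k : R) * π ^ k) :
    ∀ k < p - 1, a k = b k := by
  set d : ℕ → ℤ := fun k => (a k : ℤ) - b k
  have hd : ∑ k ∈ range (p - 1), (a k : R) * π ^ k - ∑ k ∈ range (p - 1), (b k : R) * π ^ k =
      ∑ k ∈ range (p - 1), (d k : R) * π ^ k := by
    simp [d, ← sum_sub_distrib, sub_mul]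
  rw [hd] at hab
  -- all digit differences are divisible by `p`; the bounds then kill all but the constant one
  have hpos : ∀ k, 0 < k → k < p - 1 → a k = b k := fun k hk hkp => by
    have hdk :=
      h.intCast_dvd_of_pow_dvd_sum le_rfl ((pow_dvd_pow π (Nat.sub_le p 1)).trans hab) k hkp
    have hak := ha k hkp
    have hbk := hb k hkp
    simp only [digitModulus, hk.ne', if_false] at hak hbk
    exact Nat.eq_of_natCast_dvd_sub hdk hak hbk
  have h0 : (p : ℤ) ^ 2 ∣ d 0 := by
    refine h.sq_dvd_of_pow_dvd_intCast (by omega) ?_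
    rwa [sum_eq_single_of_mem 0 (mem_range.2 (by omega)) fun k hk hk0 => by
      simp [d, hpos k (Nat.pos_of_ne_zero hk0) (mem_range.1 hk)], pow_zero, mul_one] at hab
  rintro (_ | k) hk
  · exact Nat.eq_of_natCast_dvd_sub (by simpa [digitModulus] using h0) (ha 0 hk) (hb 0 hk)
  · exact hpos _ k.succ_pos hk

theorem exists_pow_dvd_sub_sum (h : IsTotallyRamifiedUniformizer π p) (m : ℕ) (r : R) :
    ∃ c : ℕ → ℤ, π ^ m ∣ r - ∑ k ∈ range m, (c k : R) * π ^ k := by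
  induction m generalizing r with
  | zero => simp
  | succ m ih =>
    obtain ⟨n, s, hs⟩ := h.exists_dvd_sub_intCast r
    obtain ⟨c, hc⟩ := ih s
    refine ⟨fun | 0 => n | k + 1 => c k, ?_⟩
    convert mul_dvd_mul_left π hc using 1
    · exact pow_succ' π m
    · simp only [sum_range_succ', pow_succ', mul_left_comm _ π, ← mul_sum, pow_zero, mul_one]
      linear_combination hs

theorem exists_intDigits_pow_dvd_sub (h : IsTotallyRamifiedUniformizer π p) (hp : 2 ≤ p)
    (r : R) : ∃ c : ℕ → ℤ, π ^ p ∣ r - ∑ k ∈ range (p - 1), (c k : R) * π ^ k := by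
  -- the remainder `π ^ (p - 1) * s = p * (u * s)` is `p * n` modulo `p * π`, with `u * s ≡ n`
  obtain ⟨c, s, hs⟩ := h.exists_pow_dvd_sub_sum (p - 1) r
  obtain ⟨u, hu⟩ := h.associated_pow.symm
  obtain ⟨n, t, ht⟩ := h.exists_dvd_sub_intCast (u * s)
  refine ⟨c + Pi.single 0 (p * n), ?_⟩
  have hsum : ∑ k ∈ range (p - 1), (((c + Pi.single 0 (p * n) : ℕ → ℤ)) k : R) * π ^ k =
      ∑ k ∈ range (p - 1), (c k : R) * π ^ k + p * n := by
    simp [add_mul, sum_add_distrib, Pi.single_apply, show 0 < p - 1 by omega]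
  have hpπ : π ^ p ∣ (p : R) * π := by simpa using h.pow_dvd_natCast_mul_pow (k := 1) le_rfl
  rw [hsum]
  convert dvd_mul_of_dvd_left hpπ t using 1
  linear_combination hs - s * hu + (p : R) * ht

theorem exists_isReducedDigits_pow_dvd_sum_sub (h : IsTotallyRamifiedUniformizer π p)
    (hp : 2 ≤ p) (c : ℕ → ℤ) :
    ∃ a : ℕ → ℕ, IsReducedDigits p a ∧ (∀ k, p - 1 ≤ k → a k = 0) ∧
      π ^ p ∣ ∑ k ∈ range (p - 1), (c k : R) * π ^ k - ∑ k ∈ range (p - 1), (a k : R) * π ^ k := by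
  have hM : ∀ k, (0 : ℤ) < digitModulus p k := fun k => by
    unfold digitModulus; split_ifs <;> positivity
  refine ⟨fun k => if k < p - 1 then (c k % digitModulus p k).toNat else 0, fun k hk => ?_,
    fun k hk => if_neg (by omega), ?_⟩
  · have := Int.emod_lt_of_pos (c k) (hM k)
    have := Int.emod_nonneg (c k) (hM k).ne'
    simp only [if_pos hk]
    omega
  · rw [← sum_sub_distrib]
    refine dvd_sum fun k hk => ?_
    have hck : ((c k % digitModulus p k).toNat : R) = ((c k % digitModulus p k : ℤ) : R) := by
      rw [← Int.cast_natCast, Int.toNat_of_nonneg (Int.emod_nonneg _ (hM k).ne')]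
    simp only [if_pos (mem_range.1 hk)]
    rw [← sub_mul, hck, Int.emod_def]
    push_cast
    rw [sub_sub_cancel, mul_right_comm]
    exact dvd_mul_of_dvd_left (h.pow_dvd_digitModulus_mul_pow hp k) _

theorem exists_isReducedDigits_pow_dvd_sub (h : IsTotallyRamifiedUniformizer π p) (hp : 2 ≤ p)
    (r : R) : ∃ a : ℕ → ℕ, IsReducedDigits p a ∧ (∀ k, p - 1 ≤ k → a k = 0) ∧
      π ^ p ∣ r - ∑ k ∈ range (p - 1), (a k : R) * π ^ k := by
  obtain ⟨c, hc⟩ := h.exists_intDigits_pow_dvd_sub hp r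
  obtain ⟨a, ha, ha0, hca⟩ := h.exists_isReducedDigits_pow_dvd_sum_sub hp c
  exact ⟨a, ha, ha0, by simpa using dvd_add hc hca⟩

theorem existsUnique_isReducedDigits_pow_dvd_sub [IsDomain R]
    (h : IsTotallyRamifiedUniformizer π p) (hp : 2 ≤ p) (r : R) :
    ∃! a : ℕ → ℕ, (IsReducedDigits p a ∧ ∀ k, p - 1 ≤ k → a k = 0) ∧
      π ^ p ∣ r - ∑ k ∈ range (p - 1), (a k : R) * π ^ k := by
  obtain ⟨a, ha, ha0, hra⟩ := h.exists_isReducedDigits_pow_dvd_sub hp r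
  refine ⟨a, ⟨⟨ha, ha0⟩, hra⟩, fun b ⟨⟨hb, hb0⟩, hrb⟩ => funext fun k => ?_⟩
  rcases lt_or_ge k (p - 1) with hk | hk
  · exact h.eq_of_pow_dvd_sum_sub_sum hp hb ha (by simpa using dvd_sub hra hrb) k hk
  · rw [ha0 k hk, hb0 k hk]

theorem exists_pow_dvd_pow_sub_intCast_pow (h : IsTotallyRamifiedUniformizer π p)
    (hp : p.Prime) (r : R) : ∃ c : ℤ, π ^ p ∣ r ^ p - (c : R) ^ p := by
  obtain ⟨c, t, ht⟩ := h.exists_dvd_sub_intCast r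
  obtain ⟨s, hs⟩ := exists_add_pow_prime_eq hp (c : R) (π * t)
  have hpπ : π ^ p ∣ (p : R) * π := by simpa using h.pow_dvd_natCast_mul_pow (k := 1) le_rfl
  refine ⟨c, ?_⟩
  rw [eq_add_of_sub_eq' ht, hs]
  convert dvd_add (dvd_mul_right (π ^ p) (t ^ p)) (dvd_mul_of_dvd_left hpπ (c * t * s)) using 1
  ring

theorem exists_pow_dvd_sum_sub_pow_iff [IsDomain R] (h : IsTotallyRamifiedUniformizer π p)
    (hp : p.Prime) {a : ℕ → ℕ} (ha : IsReducedDigits p a) :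
    (∃ ξ : R, π ^ p ∣ ∑ k ∈ range (p - 1), (a k : R) * π ^ k - ξ ^ p) ↔
      (∀ k, 1 ≤ k → k ≤ p - 2 → a k = 0) ∧ ∃ b : ℤ, (a 0 : ℤ) ≡ b ^ p [ZMOD (p : ℤ) ^ 2] := by
  have hp2 := hp.two_le
  constructor
  · rintro ⟨ξ, hξ⟩
    obtain ⟨c, hc⟩ := h.exists_pow_dvd_pow_sub_intCast_pow hp ξ
    set m := (c ^ p % (p : ℤ) ^ 2).toNat
    have hm : (m : ℤ) = c ^ p % (p : ℤ) ^ 2 :=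
      Int.toNat_of_nonneg (Int.emod_nonneg _ (by positivity))
    have hmp : IsReducedDigits p (Pi.single 0 m) := by
      rintro (_ | k) -
      · have : (m : ℤ) < (p : ℤ) ^ 2 := hm ▸ Int.emod_lt_of_pos _ (by positivity)
        simpa [digitModulus] using (by exact_mod_cast this : m < p ^ 2)
      · simp [digitModulus, hp.pos]
    have hcm : π ^ p ∣ (c : R) ^ p - m := by
      have := h.pow_dvd_intCast_of_sq_dvd hp2 (Int.mod_modEq (c ^ p) _).dvd
      rwa [← hm, Int.cast_sub, Int.cast_natCast, Int.cast_pow] at this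
    have heq := h.eq_of_pow_dvd_sum_sub_sum hp2 ha hmp (by
      rw [sum_range_eq_of_forall_pos_eq_zero (a := Pi.single 0 m) π (by omega)
        fun k hk _ => Pi.single_eq_of_ne hk.ne' _]
      simpa using dvd_add (dvd_add hξ hc) hcm)
    refine ⟨fun k hk hk' => ?_, c, ?_⟩
    · simpa [show k ≠ 0 by omega] using heq k (by omega)
    · rw [heq 0 (by omega), Pi.single_eq_same, hm]
      exact Int.mod_modEq _ _
  · rintro ⟨ha0, b, hb⟩
    refine ⟨b, ?_⟩
    rw [sum_range_eq_of_forall_pos_eq_zero π (by omega) fun k hk hk' => ha0 k hk (by omega)]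
    simpa using h.pow_dvd_intCast_of_sq_dvd hp2 hb.symm.dvd

end IsTotallyRamifiedUniformizer

end Uniformizer

namespace IsPrimitiveRoot

theorem associated_one_sub_pow_sub_one_prime {A : Type*} [CommRing A] [IsDomain A] {μ : A}
    {p : ℕ} (hp : p.Prime) (hμ : IsPrimitiveRoot μ p) :
    Associated ((1 - μ) ^ (p - 1)) (p : A) := by
  obtain ⟨n, rfl⟩ : ∃ n, p = n + 1 := ⟨p - 1, by have := hp.pos; omega⟩
  have hpow : (1 - μ) ^ n = ∏ _k ∈ range n, (1 - μ) := by simp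
  rw [Nat.add_sub_cancel, hpow, Nat.cast_succ, ← hμ.prod_one_sub_pow_eq_order]
  refine Associated.prod _ _ _ fun k hk => ?_
  have hcop : (k + 1).Coprime (n + 1) := Nat.Coprime.symm <| hp.coprime_iff_not_dvd.2 <|
    Nat.not_dvd_of_pos_of_lt k.succ_pos (by simpa using mem_range.1 hk)
  simpa using (hμ.associated_sub_one_pow_sub_one_of_coprime hcop).neg_neg

theorem intCast_dvd_of_eq_one_sub_mul_aeval {K : Type*} [Field K] [CharZero K]
    {μ : K} {p : ℕ} (hp : p.Prime) (hμ : IsPrimitiveRoot μ p) {n : ℤ} {P : ℤ[X]}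
    (h : (n : K) = (1 - μ) * aeval μ P) : (p : ℤ) ∣ n := by
  have : Fact p.Prime := ⟨hp⟩
  obtain ⟨G, hG⟩ : cyclotomic p ℤ ∣ C n - (1 - X) * P := by
    rw [cyclotomic_eq_minpoly hμ hp.pos]
    exact minpoly.isIntegrallyClosed_dvd (hμ.isIntegral hp.pos) (by simp [h])
  exact ⟨G.eval 1, by simpa [eval_one_cyclotomic_prime] using congrArg (eval 1) hG⟩

end IsPrimitiveRoot

noncomputable abbrev adjoinZeta (ζ : ℂ) : Subalgebra ℤ ℂ := (aeval ζ : ℤ[X] →ₐ[ℤ] ℂ).range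

noncomputable abbrev evalZeta (ζ : ℂ) : ℤ[X] →ₐ[ℤ] adjoinZeta ζ :=
  (aeval ζ : ℤ[X] →ₐ[ℤ] ℂ).rangeRestrict

section adjoinZeta

variable {ζ : ℂ} {p : ℕ}

theorem evalZeta_surjective (ζ : ℂ) : Function.Surjective (evalZeta ζ) :=
  AlgHom.rangeRestrict_surjective _

@[simp]
theorem coe_evalZeta (P : ℤ[X]) : (evalZeta ζ P : ℂ) = aeval ζ P := rfl

theorem congZeta_iff_dvd {e : ℕ} {x y : adjoinZeta ζ} :
    congZeta ζ e x y ↔ (1 - evalZeta ζ X) ^ e ∣ x - y := by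
  constructor
  · rintro ⟨P, hP⟩
    exact ⟨evalZeta ζ P, Subtype.ext (by simpa using hP)⟩
  · rintro ⟨w, hw⟩
    obtain ⟨P, rfl⟩ := evalZeta_surjective ζ w
    exact ⟨P, by simpa using congrArg Subtype.val hw⟩

theorem isPrimitiveRoot_evalZeta_X (hζ : IsPrimitiveRoot ζ p) :
    IsPrimitiveRoot (evalZeta ζ X) p :=
  IsPrimitiveRoot.of_map_of_injective (f := (adjoinZeta ζ).val) (by simpa using hζ)
    Subtype.val_injective

theorem isTotallyRamifiedUniformizer_one_sub_evalZeta_X (hp : p.Prime)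
    (hζ : IsPrimitiveRoot ζ p) : IsTotallyRamifiedUniformizer (1 - evalZeta ζ X) p where
  ne_zero := sub_ne_zero.2 ((isPrimitiveRoot_evalZeta_X hζ).ne_one hp.one_lt).symm
  exists_dvd_sub_intCast r := by
    obtain ⟨P, rfl⟩ := evalZeta_surjective ζ r
    refine ⟨P.eval 1, ?_⟩
    rw [← neg_dvd, neg_sub]
    simpa using map_dvd (evalZeta ζ) (X_sub_C_dvd_sub_C_eval (a := 1) (p := P))
  associated_pow := (isPrimitiveRoot_evalZeta_X hζ).associated_one_sub_pow_sub_one_prime hp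
  intCast_dvd_of_dvd n := by
    rintro ⟨w, hw⟩
    obtain ⟨P, rfl⟩ := evalZeta_surjective ζ w
    exact hζ.intCast_dvd_of_eq_one_sub_mul_aeval hp (P := P)
      (by simpa using congrArg Subtype.val hw)

end adjoinZeta

theorem stmt7_general (q : ℕ) (hq : q.Prime)
    (ζ : ℂ) (hζ : IsPrimitiveRoot ζ q) :
    (∀ P : Polynomial ℤ, ∃! a : ℕ → ℕ,
      (a 0 < q^2 ∧ (∀ k, 1 ≤ k → k ≤ q - 2 → a k < q) ∧ (∀ k, q - 1 ≤ k → a k = 0)) ∧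
        congZeta ζ q (Polynomial.aeval ζ P)
          (∑ k ∈ Finset.range (q - 1), (a k : ℂ) * (1 - ζ) ^ k)) ∧
    (∀ a : ℕ → ℕ, a 0 < q^2 → (∀ k, 1 ≤ k → k ≤ q - 2 → a k < q) →
      ((∃ ξQ : Polynomial ℤ, congZeta ζ q
          (∑ k ∈ Finset.range (q - 1), (a k : ℂ) * (1 - ζ) ^ k)
          ((Polynomial.aeval ζ ξQ) ^ q)) ↔
        ((∀ k, 1 ≤ k → k ≤ q - 2 → a k = 0) ∧
          ∃ b : ℤ, (a 0 : ℤ) ≡ b ^ q [ZMOD ((q : ℤ)^2)]))) := by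
  have h := isTotallyRamifiedUniformizer_one_sub_evalZeta_X hq hζ
  have hsum (a : ℕ → ℕ) : ∑ k ∈ range (q - 1), (a k : ℂ) * (1 - ζ) ^ k =
      ↑(∑ k ∈ range (q - 1), (a k : adjoinZeta ζ) * (1 - evalZeta ζ X) ^ k) := by
    simp
  refine ⟨fun P => ?_, fun a ha0 ha => ?_⟩
  · simp only [hsum, ← coe_evalZeta, congZeta_iff_dvd, ← isReducedDigits_iff hq.two_le,
      ← and_assoc]
    exact h.existsUnique_isReducedDigits_pow_dvd_sub hq.two_le (evalZeta ζ P)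
  · simp only [hsum, ← coe_evalZeta, ← SubmonoidClass.coe_pow, congZeta_iff_dvd]
    rw [← h.exists_pow_dvd_sum_sub_pow_iff hq ((isReducedDigits_iff hq.two_le).2 ⟨ha0, ha⟩)]
    refine ⟨fun ⟨_, hP⟩ => ⟨_, hP⟩, fun ⟨ξ, hξ⟩ => ?_⟩
    obtain ⟨P, rfl⟩ := evalZeta_surjective ζ ξ
    exact ⟨P, hξ⟩

theorem stmt7 (q : ℕ) (hq : q.Prime) (hodd : Odd q)
    (ζ : ℂ) (hζ : IsPrimitiveRoot ζ q) :
    (∀ P : Polynomial ℤ, ∃! a : ℕ → ℕ,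
      (a 0 < q^2 ∧ (∀ k, 1 ≤ k → k ≤ q - 2 → a k < q) ∧ (∀ k, q - 1 ≤ k → a k = 0)) ∧
        congZeta ζ q (Polynomial.aeval ζ P)
          (∑ k ∈ Finset.range (q - 1), (a k : ℂ) * (1 - ζ) ^ k)) ∧
    (∀ a : ℕ → ℕ, a 0 < q^2 → (∀ k, 1 ≤ k → k ≤ q - 2 → a k < q) →
      ((∃ ξQ : Polynomial ℤ, congZeta ζ q
          (∑ k ∈ Finset.range (q - 1), (a k : ℂ) * (1 - ζ) ^ k)
          ((Polynomial.aeval ζ ξQ) ^ q)) ↔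
        ((∀ k, 1 ≤ k → k ≤ q - 2 → a k = 0) ∧
          ∃ b : ℤ, (a 0 : ℤ) ≡ b ^ q [ZMOD ((q : ℤ)^2)]))) :=
  stmt7_general q hq ζ hζ
end

section
/- Let q be an odd prime and let m, n ∈ ℤ with q ∤ (m−n), and let i be an integer with 0 ≤ i ≤ q−1. Then μ^{(i)} ≡ (m−n)^{(q−1)q/2} · ζ_q^{i + n·(m−n)*} (mod (1−ζ_q)²) in ℤ[ζ_q]. Moreover, the following are equivalent: (a) i·(m−n) ≡ −n (mod q); (b) μ^{(i)} ≡ (m−n)^{(q−1)q/2} (mod (1−ζ_q)²). -/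
open Finset Polynomial

namespace StmtAux

open Polynomial

variable {ζ : ℂ} {q : ℕ}

/-- The subring `ℤ[ζ] ⊆ ℂ`. -/
noncomputable def Rz (ζ : ℂ) : Subalgebra ℤ ℂ := (Polynomial.aeval ζ : Polynomial ℤ →ₐ[ℤ] ℂ).range

lemma zeta_mem : ζ ∈ Rz ζ := ⟨Polynomial.X, Polynomial.aeval_X ζ⟩

lemma int_mem (t : ℤ) : ((t : ℂ)) ∈ Rz ζ := ⟨Polynomial.C t, by simp⟩

lemma cz_refl (e : ℕ) (x : ℂ) : congZeta ζ e x x := ⟨0, by simp⟩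

lemma cz_symm {e : ℕ} {x y : ℂ} (h : congZeta ζ e x y) : congZeta ζ e y x := by
  obtain ⟨P, hP⟩ := h
  exact ⟨-P, by rw [map_neg]; linear_combination -hP⟩

lemma cz_trans {e : ℕ} {x y z : ℂ} (h1 : congZeta ζ e x y) (h2 : congZeta ζ e y z) :
    congZeta ζ e x z := by
  obtain ⟨P, hP⟩ := h1; obtain ⟨Q, hQ⟩ := h2
  exact ⟨P + Q, by rw [map_add]; linear_combination hP + hQ⟩

lemma cz_mul {e : ℕ} {x x' y y' : ℂ} (hx : x ∈ Rz ζ) (hy' : y' ∈ Rz ζ)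
    (h1 : congZeta ζ e x x') (h2 : congZeta ζ e y y') :
    congZeta ζ e (x * y) (x' * y') := by
  obtain ⟨A, hA⟩ := hx; obtain ⟨B, hB⟩ := hy'
  obtain ⟨P, hP⟩ := h1; obtain ⟨Q, hQ⟩ := h2
  have hA' : (Polynomial.aeval ζ) A = x := hA
  have hB' : (Polynomial.aeval ζ) B = y' := hB
  refine ⟨A * Q + P * B, ?_⟩
  rw [map_add, map_mul, map_mul]
  linear_combination x * hQ + y' * hP - (1 - ζ)^e * ((Polynomial.aeval ζ) Q) * hA'
    - (1 - ζ)^e * ((Polynomial.aeval ζ) P) * hB'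

lemma cz_pow {e : ℕ} {x y : ℂ} (hx : x ∈ Rz ζ) (hy : y ∈ Rz ζ)
    (h : congZeta ζ e x y) : ∀ k : ℕ, congZeta ζ e (x ^ k) (y ^ k) := by
  intro k
  induction k with
  | zero => simpa using cz_refl e 1
  | succ k ih =>
      rw [pow_succ, pow_succ]
      exact cz_mul (pow_mem hx k) hy ih h

lemma cz_prod {e : ℕ} {α : Type*} (s : Finset α) (f g : α → ℂ)
    (hf : ∀ j ∈ s, f j ∈ Rz ζ) (hg : ∀ j ∈ s, g j ∈ Rz ζ)
    (h : ∀ j ∈ s, congZeta ζ e (f j) (g j)) :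
    congZeta ζ e (∏ j ∈ s, f j) (∏ j ∈ s, g j) := by
  induction s using Finset.cons_induction with
  | empty => simpa using cz_refl e 1
  | cons a s ha ih =>
      rw [Finset.prod_cons, Finset.prod_cons]
      exact cz_mul (hf a (Finset.mem_cons_self a s))
        (prod_mem fun j hj => hg j (Finset.mem_cons_of_mem hj))
        (h a (Finset.mem_cons_self a s))
        (ih (fun j hj => hf j (Finset.mem_cons_of_mem hj))
          (fun j hj => hg j (Finset.mem_cons_of_mem hj))
          (fun j hj => h j (Finset.mem_cons_of_mem hj)))

/-- `ζ^k ≡ 1 - k (1-ζ)` mod `(1-ζ)²`. -/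
lemma zeta_pow_cong (k : ℕ) : congZeta ζ 2 (ζ ^ k) (1 - (k : ℂ) * (1 - ζ)) := by
  induction k with
  | zero => exact ⟨0, by simp⟩
  | succ k ih =>
      obtain ⟨P, hP⟩ := ih
      refine ⟨P + ∑ l ∈ Finset.range k, Polynomial.X ^ l, ?_⟩
      rw [map_add, map_sum]
      simp only [Polynomial.aeval_X_pow]
      have hg : (∑ l ∈ Finset.range k, ζ ^ l) * (ζ - 1) = ζ ^ k - 1 := geom_sum_mul ζ k
      push_cast
      linear_combination hP + (1 - ζ) * hg

/-- `q = (1-ζ) w` with `w ∈ ℤ[ζ]`. -/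
lemma q_eq_lambda_mul (hq : q.Prime) (hζ : IsPrimitiveRoot ζ q) :
    ∃ W : Polynomial ℤ, (q : ℂ) = (1 - ζ) * (Polynomial.aeval ζ W) := by
  haveI : Fact q.Prime := ⟨hq⟩
  have hroot : (Polynomial.aeval ζ) (Polynomial.cyclotomic q ℤ) = 0 := by
    have h1 : Polynomial.IsRoot (Polynomial.cyclotomic q ℂ) ζ := hζ.isRoot_cyclotomic hq.pos
    rw [Polynomial.aeval_def, ← Polynomial.eval_map, Polynomial.map_cyclotomic]
    exact h1
  have hdvd : (Polynomial.X - Polynomial.C (1 : ℤ)) ∣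
      (Polynomial.cyclotomic q ℤ - Polynomial.C (q : ℤ)) := by
    rw [Polynomial.dvd_iff_isRoot]
    simp [Polynomial.IsRoot, Polynomial.eval_one_cyclotomic_prime]
  obtain ⟨W, hW⟩ := hdvd
  refine ⟨W, ?_⟩
  have h2 := congrArg (Polynomial.aeval ζ) hW
  simp only [map_sub, map_mul, Polynomial.aeval_X, Polynomial.aeval_C, hroot,
    algebraMap_int_eq, eq_intCast, map_intCast, map_one, map_natCast] at h2
  linear_combination -h2

/-- If an integer is divisible by `(1-ζ)` in `ℤ[ζ]`, it is divisible by `q`. -/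
lemma lambda_dvd_int (hq : q.Prime) (hζ : IsPrimitiveRoot ζ q) (t : ℤ) (P : Polynomial ℤ)
    (h : (t : ℂ) = (1 - ζ) * (Polynomial.aeval ζ P)) : (q : ℤ) ∣ t := by
  haveI : Fact q.Prime := ⟨hq⟩
  set Q : Polynomial ℤ := (1 - Polynomial.X) * P - Polynomial.C t with hQdef
  have h1 : (Polynomial.aeval ζ) Q = 0 := by
    simp only [hQdef, map_sub, map_mul, map_one, Polynomial.aeval_X, Polynomial.aeval_C,
      algebraMap_int_eq, eq_intCast, map_intCast, map_one, map_natCast]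
    linear_combination -h
  have h2 : minpoly ℚ ζ ∣ Q.map (Int.castRingHom ℚ) := by
    apply minpoly.dvd ℚ ζ
    rwa [show (Int.castRingHom ℚ) = algebraMap ℤ ℚ from rfl, Polynomial.aeval_map_algebraMap]
  rw [← Polynomial.cyclotomic_eq_minpoly_rat hζ hq.pos,
    ← Polynomial.map_cyclotomic q (Int.castRingHom ℚ)] at h2
  have h3 : Polynomial.cyclotomic q ℤ ∣ Q :=
    (Polynomial.map_dvd_map _ Int.cast_injective (Polynomial.cyclotomic.monic q ℤ)).mp h2
  obtain ⟨R, hR⟩ := h3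
  have h4 := congrArg (Polynomial.eval 1) hR
  rw [Polynomial.eval_mul, Polynomial.eval_one_cyclotomic_prime] at h4
  rw [hQdef] at h4
  simp at h4
  exact ⟨-Polynomial.eval 1 R, by linarith⟩

lemma zpow_congr (hq : q.Prime) (hζ : IsPrimitiveRoot ζ q) {a b : ℤ}
    (h : a ≡ b [ZMOD (q : ℤ)]) : ζ ^ a = ζ ^ b := by
  have hne : ζ ≠ 0 := fun h0 => by
    simpa [h0, zero_pow hq.pos.ne', eq_comm] using hζ.pow_eq_one
  have hdvd : (q : ℤ) ∣ (a - b) := Int.ModEq.dvd h.symm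
  have h1 : ζ ^ (a - b) = 1 := (hζ.zpow_eq_one_iff_dvd _).mpr hdvd
  calc ζ ^ a = ζ ^ (b + (a - b)) := by ring_nf
    _ = ζ ^ b * ζ ^ (a - b) := zpow_add₀ hne b (a - b)
    _ = ζ ^ b := by rw [h1, mul_one]

lemma pow_congr (hq : q.Prime) (hζ : IsPrimitiveRoot ζ q) {a b : ℕ}
    (h : a ≡ b [MOD q]) : ζ ^ a = ζ ^ b := by
  have h' : (a : ℤ) ≡ (b : ℤ) [ZMOD (q : ℤ)] := Int.natCast_modEq_iff.mpr h
  rw [← zpow_natCast, ← zpow_natCast ζ b]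
  exact zpow_congr hq hζ h'

end StmtAux

theorem stmt12 (q : ℕ) (hq : q.Prime) (hodd : Odd q) (m n : ℤ)
    (hmn : ¬ (q : ℤ) ∣ (m - n))
    (ζ : ℂ) (hζ : IsPrimitiveRoot ζ q)
    (i : ℕ) (hi : i ≤ q - 1) :
    congZeta ζ 2 (mu q m n i ζ)
        (((m - n : ℤ) : ℂ) ^ ((q - 1) * q / 2) *
          ζ ^ ((i : ℤ) + n * (istar q (m - n) : ℤ))) ∧
      (((i : ℤ) * (m - n) ≡ -n [ZMOD (q : ℤ)]) ↔
        congZeta ζ 2 (mu q m n i ζ) (((m - n : ℤ) : ℂ) ^ ((q - 1) * q / 2))) := by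
  classical
  haveI hfact : Fact q.Prime := ⟨hq⟩
  haveI : NeZero q := ⟨hq.pos.ne'⟩
  have hq1 : 1 < q := hq.one_lt
  -- ZMod preliminaries
  have hD0 : ((m - n : ℤ) : ZMod q) ≠ 0 := by
    rw [Ne, ZMod.intCast_zmod_eq_zero_iff_dvd]; exact hmn
  have hDsplit : ((m : ℤ) : ZMod q) - ((n : ℤ) : ZMod q) = ((m - n : ℤ) : ZMod q) := by
    push_cast; ring
  set c : ℕ := ((-((n : ℤ) : ZMod q)) * ((m - n : ℤ) : ZMod q)⁻¹).val with hcdef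
  have hc : ((c : ℕ) : ZMod q) = (-((n : ℤ) : ZMod q)) * ((m - n : ℤ) : ZMod q)⁻¹ :=
    ZMod.natCast_rightInverse _
  have histar : ((istar q (m - n) : ℕ) : ZMod q) = ((m - n : ℤ) : ZMod q)⁻¹ :=
    ZMod.natCast_rightInverse _
  have hDDinv : ((m - n : ℤ) : ZMod q) * ((m - n : ℤ) : ZMod q)⁻¹ = 1 := mul_inv_cancel₀ hD0
  have hnDc : (q : ℤ) ∣ (n + (m - n) * (c : ℤ)) := by
    rw [← ZMod.intCast_zmod_eq_zero_iff_dvd]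
    have h1 : ((n + (m - n) * (c : ℤ) : ℤ) : ZMod q)
        = ((n : ℤ) : ZMod q) + ((m - n : ℤ) : ZMod q) * ((c : ℕ) : ZMod q) := by
      push_cast; ring
    rw [h1, hc]
    calc ((n : ℤ) : ZMod q) + ((m - n : ℤ) : ZMod q)
          * ((-((n : ℤ) : ZMod q)) * ((m - n : ℤ) : ZMod q)⁻¹)
        = ((n : ℤ) : ZMod q) + (-((n : ℤ) : ZMod q))
          * (((m - n : ℤ) : ZMod q) * ((m - n : ℤ) : ZMod q)⁻¹) := by ring
      _ = 0 := by rw [hDDinv, mul_one]; ring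
  obtain ⟨s, hs⟩ := hnDc
  obtain ⟨W, hW⟩ := StmtAux.q_eq_lambda_mul hq hζ
  -- factorwise congruence
  have hfac : ∀ j ∈ Finset.Icc 1 (q - 1),
      congZeta ζ 2 ((m : ℂ) - (n : ℂ) * ζ ^ j) (((m - n : ℤ) : ℂ) * ζ ^ (c * j)) := by
    intro j hj
    obtain ⟨P1, hP1⟩ := StmtAux.zeta_pow_cong (ζ := ζ) j
    have hA : congZeta ζ 2 ((m : ℂ) - (n : ℂ) * ζ ^ j)
        ((m : ℂ) - (n : ℂ) * (1 - (j : ℂ) * (1 - ζ))) := by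
      refine ⟨-(Polynomial.C n) * P1, ?_⟩
      simp only [map_mul, map_neg, map_sub, map_intCast, Polynomial.aeval_C, algebraMap_int_eq, eq_intCast]
      linear_combination (-(n : ℂ)) * hP1
    obtain ⟨P2, hP2⟩ := StmtAux.zeta_pow_cong (ζ := ζ) (c * j)
    have hC : congZeta ζ 2 (((m - n : ℤ) : ℂ) * ζ ^ (c * j))
        (((m - n : ℤ) : ℂ) * (1 - ((c * j : ℕ) : ℂ) * (1 - ζ))) := by
      refine ⟨Polynomial.C (m - n) * P2, ?_⟩
      simp only [map_mul, map_sub, map_intCast, Polynomial.aeval_C, algebraMap_int_eq, eq_intCast]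
      push_cast at hP2 ⊢
      linear_combination ((m : ℂ) - (n : ℂ)) * hP2
    have hsC : ((n : ℂ) + ((m : ℂ) - (n : ℂ)) * (c : ℂ)) = (q : ℂ) * (s : ℂ) := by
      have := congrArg (fun t : ℤ => (t : ℂ)) hs
      push_cast at this
      linear_combination this
    have hMid : congZeta ζ 2 ((m : ℂ) - (n : ℂ) * (1 - (j : ℂ) * (1 - ζ)))
        (((m - n : ℤ) : ℂ) * (1 - ((c * j : ℕ) : ℂ) * (1 - ζ))) := by
      refine ⟨Polynomial.C ((j : ℤ) * s) * W, ?_⟩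
      simp only [map_mul, map_sub, map_intCast, Polynomial.aeval_C, algebraMap_int_eq, eq_intCast]
      push_cast
      linear_combination (j : ℂ) * (1 - ζ) * hsC + (j : ℂ) * (s : ℂ) * (1 - ζ) * hW
    exact StmtAux.cz_trans hA (StmtAux.cz_trans hMid (StmtAux.cz_symm hC))
  -- memberships
  have memf : ∀ j : ℕ, ((m : ℂ) - (n : ℂ) * ζ ^ j) ∈ StmtAux.Rz ζ := fun j =>
    sub_mem (StmtAux.int_mem m) (mul_mem (StmtAux.int_mem n) (pow_mem StmtAux.zeta_mem j))
  have memg : ∀ j : ℕ, (((m - n : ℤ) : ℂ) * ζ ^ (c * j)) ∈ StmtAux.Rz ζ := fun j =>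
    mul_mem (StmtAux.int_mem (m - n)) (pow_mem StmtAux.zeta_mem (c * j))
  -- product congruence
  have hprod : congZeta ζ 2
      (∏ j ∈ Finset.Icc 1 (q - 1), ((m : ℂ) - (n : ℂ) * ζ ^ j) ^ (jstar q j))
      (∏ j ∈ Finset.Icc 1 (q - 1), (((m - n : ℤ) : ℂ) * ζ ^ (c * j)) ^ (jstar q j)) := by
    apply StmtAux.cz_prod
    · exact fun j _ => pow_mem (memf j) _
    · exact fun j _ => pow_mem (memg j) _
    · exact fun j hj => StmtAux.cz_pow (memf j) (memg j) (hfac j hj) (jstar q j)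
  have hmu : congZeta ζ 2 (mu q m n i ζ)
      (ζ ^ i * ∏ j ∈ Finset.Icc 1 (q - 1), (((m - n : ℤ) : ℂ) * ζ ^ (c * j)) ^ (jstar q j)) := by
    unfold mu
    exact StmtAux.cz_mul (pow_mem StmtAux.zeta_mem i)
      (prod_mem fun j _ => pow_mem (memg j) _) (StmtAux.cz_refl 2 (ζ ^ i)) hprod
  -- jstar facts and rewriting the right-hand product
  have hjne : ∀ j ∈ Finset.Icc 1 (q - 1), ((j : ℕ) : ZMod q) ≠ 0 := by
    intro j hj
    rw [Finset.mem_Icc] at hj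
    rw [Ne, ZMod.natCast_eq_zero_iff]
    intro hdvd
    have := Nat.le_of_dvd (by omega) hdvd
    omega
  have hjj : ∀ j ∈ Finset.Icc 1 (q - 1), (j * jstar q j) ≡ 1 [MOD q] := by
    intro j hj
    rw [← ZMod.natCast_eq_natCast_iff]
    push_cast
    rw [jstar, ZMod.natCast_rightInverse _]
    exact mul_inv_cancel₀ (hjne j hj)
  have hstep : ∀ j ∈ Finset.Icc 1 (q - 1),
      (((m - n : ℤ) : ℂ) * ζ ^ (c * j)) ^ (jstar q j)
        = ((m - n : ℤ) : ℂ) ^ (jstar q j) * ζ ^ c := by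
    intro j hj
    rw [mul_pow, ← pow_mul]
    congr 1
    apply StmtAux.pow_congr hq hζ
    have h1 := Nat.ModEq.mul_left c (hjj j hj)
    simpa [mul_assoc] using h1
  -- sum of jstar over Icc
  have hjmem : ∀ j ∈ Finset.Icc 1 (q - 1), jstar q j ∈ Finset.Icc 1 (q - 1) := by
    intro j hj
    have hlt : jstar q j < q := ZMod.val_lt _
    have hne : jstar q j ≠ 0 := by
      intro h0
      have : ((j : ℕ) : ZMod q)⁻¹ = 0 := (ZMod.val_eq_zero _).mp h0
      exact hjne j hj (inv_eq_zero.mp this)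
    rw [Finset.mem_Icc]; omega
  have hjinv : ∀ j ∈ Finset.Icc 1 (q - 1), jstar q (jstar q j) = j := by
    intro j hj
    rw [Finset.mem_Icc] at hj
    have h1 : ((jstar q j : ℕ) : ZMod q) = ((j : ℕ) : ZMod q)⁻¹ :=
      ZMod.natCast_rightInverse _
    rw [jstar, h1, inv_inv]
    exact ZMod.val_cast_of_lt (by omega)
  have hgauss : ∀ N : ℕ, (∑ j ∈ Finset.Icc 1 N, j) * 2 = N * (N + 1) := by
    intro N
    induction N with
    | zero => simp
    | succ N ih =>
        rw [Finset.sum_Icc_succ_top (by omega : 1 ≤ N + 1), add_mul, ih]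
        ring
  have hSsum : (∑ j ∈ Finset.Icc 1 (q - 1), jstar q j) = (q - 1) * q / 2 := by
    have hbij : (∑ j ∈ Finset.Icc 1 (q - 1), jstar q j) = ∑ j ∈ Finset.Icc 1 (q - 1), j :=
      Finset.sum_nbij' (fun j => jstar q j) (fun j => jstar q j) hjmem hjmem hjinv hjinv
        (fun a _ => rfl)
    have h2 := hgauss (q - 1)
    have h3 : q - 1 + 1 = q := by omega
    rw [h3] at h2
    omega
  -- the power of ζ
  have hzeq : ζ ^ (i + c * (q - 1)) = ζ ^ ((i : ℤ) + n * (istar q (m - n) : ℤ)) := by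
    rw [← zpow_natCast]
    apply StmtAux.zpow_congr hq hζ
    rw [← ZMod.intCast_eq_intCast_iff]
    have hq1' : ((q - 1 : ℕ) : ZMod q) = -1 := by
      have h5 : ((q - 1 + 1 : ℕ) : ZMod q) = 0 := by
        rw [show q - 1 + 1 = q by omega]; exact ZMod.natCast_self q
      push_cast at h5
      linear_combination h5
    push_cast
    rw [hq1', hc, histar]
    ring
  -- assemble part 1
  have heq : ζ ^ i * ∏ j ∈ Finset.Icc 1 (q - 1), (((m - n : ℤ) : ℂ) * ζ ^ (c * j)) ^ (jstar q j)
      = ((m - n : ℤ) : ℂ) ^ ((q - 1) * q / 2) * ζ ^ ((i : ℤ) + n * (istar q (m - n) : ℤ)) := by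
    rw [Finset.prod_congr rfl hstep, Finset.prod_mul_distrib,
      Finset.prod_pow_eq_pow_sum, hSsum, Finset.prod_const, Nat.card_Icc]
    rw [show q - 1 + 1 - 1 = q - 1 by omega, ← pow_mul, ← hzeq, pow_add]
    ring
  have part1 : congZeta ζ 2 (mu q m n i ζ)
      (((m - n : ℤ) : ℂ) ^ ((q - 1) * q / 2) * ζ ^ ((i : ℤ) + n * (istar q (m - n) : ℤ))) := by
    rw [← heq]; exact hmu
  -- the mod-q criterion
  have hiff : ((i : ℤ) * (m - n) ≡ -n [ZMOD (q : ℤ)])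
      ↔ ((q : ℤ) ∣ ((i : ℤ) + n * (istar q (m - n) : ℤ))) := by
    rw [← ZMod.intCast_eq_intCast_iff, ← ZMod.intCast_zmod_eq_zero_iff_dvd]
    have hL : (((i : ℤ) * (m - n) : ℤ) : ZMod q)
        = (i : ZMod q) * (((m : ℤ) : ZMod q) - ((n : ℤ) : ZMod q)) := by push_cast; ring
    have hR : (((i : ℤ) + n * (istar q (m - n) : ℤ) : ℤ) : ZMod q)
        = (i : ZMod q) + ((n : ℤ) : ZMod q) * ((istar q (m - n) : ℕ) : ZMod q) := by
      push_cast; ring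
    have hN : ((-n : ℤ) : ZMod q) = -((n : ℤ) : ZMod q) := by push_cast; ring
    rw [hL, hR, hN, hDsplit, histar]
    constructor
    · intro h
      have h' : (i : ZMod q) * ((m - n : ℤ) : ZMod q) * ((m - n : ℤ) : ZMod q)⁻¹
          = -((n : ℤ) : ZMod q) * ((m - n : ℤ) : ZMod q)⁻¹ := by rw [h]
      rw [mul_assoc, hDDinv, mul_one] at h'
      rw [h']; ring
    · intro h
      have ha : (i : ZMod q) = -(((n : ℤ) : ZMod q) * ((m - n : ℤ) : ZMod q)⁻¹) :=
        eq_neg_of_add_eq_zero_left h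
      rw [ha]
      calc -(((n : ℤ) : ZMod q) * ((m - n : ℤ) : ZMod q)⁻¹) * ((m - n : ℤ) : ZMod q)
          = -(((n : ℤ) : ZMod q) * (((m - n : ℤ) : ZMod q) * ((m - n : ℤ) : ZMod q)⁻¹)) := by
            ring
        _ = -((n : ℤ) : ZMod q) := by rw [hDDinv, mul_one]
  refine ⟨part1, ?_, ?_⟩
  · -- forward
    intro h
    have hdvd := hiff.mp h
    have hone : ζ ^ ((i : ℤ) + n * (istar q (m - n) : ℤ)) = 1 :=
      (hζ.zpow_eq_one_iff_dvd _).mpr hdvd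
    rw [hone, mul_one] at part1
    exact part1
  · -- backward
    intro h2
    have hcong := StmtAux.cz_trans (StmtAux.cz_symm part1) h2
    set e : ℤ := (i : ℤ) + n * (istar q (m - n) : ℤ) with hedef
    set r : ℕ := (e % q).toNat with hrdef
    have hq0 : (0 : ℤ) < (q : ℤ) := by exact_mod_cast hq.pos
    have hmod0 : (0 : ℤ) ≤ e % q := Int.emod_nonneg e (by exact_mod_cast hq.pos.ne')
    have hmodlt : e % q < q := Int.emod_lt_of_pos e hq0
    have hrlt : r < q := by omega
    have hzer : ζ ^ e = ζ ^ (r : ℕ) := by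
      rw [← zpow_natCast]
      apply StmtAux.zpow_congr hq hζ
      show e % (q : ℤ) = ((r : ℕ) : ℤ) % (q : ℤ)
      rw [hrdef, Int.toNat_of_nonneg hmod0]
      exact (Int.emod_emod_of_dvd e dvd_rfl).symm
    rw [hzer] at hcong
    have hmemA : (((m - n : ℤ) : ℂ) ^ ((q - 1) * q / 2)) ∈ StmtAux.Rz ζ :=
      pow_mem (StmtAux.int_mem (m - n)) _
    have hmemB : ((1 : ℂ) - (r : ℂ) * (1 - ζ)) ∈ StmtAux.Rz ζ := by
      have hval : (Polynomial.aeval ζ) (Polynomial.C 1 - Polynomial.C (r : ℤ)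
          * (1 - Polynomial.X)) = (1 : ℂ) - (r : ℂ) * (1 - ζ) := by
        simp only [map_sub, map_mul, map_one, map_intCast, map_natCast, Polynomial.aeval_C,
          Polynomial.aeval_X, algebraMap_int_eq, eq_intCast]
        try push_cast
        try ring
      exact ⟨_, hval⟩
    have hA : congZeta ζ 2
        (((m - n : ℤ) : ℂ) ^ ((q - 1) * q / 2) * ζ ^ (r : ℕ))
        (((m - n : ℤ) : ℂ) ^ ((q - 1) * q / 2) * (1 - (r : ℂ) * (1 - ζ))) :=
      StmtAux.cz_mul hmemA hmemB (StmtAux.cz_refl 2 _) (StmtAux.zeta_pow_cong r)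
    have hB := StmtAux.cz_trans (StmtAux.cz_symm hA) hcong
    obtain ⟨P, hP⟩ := hB
    have hne1 : (1 : ℂ) - ζ ≠ 0 := sub_ne_zero.mpr (hζ.ne_one hq1).symm
    have hkey : (((m - n) ^ ((q - 1) * q / 2) * (r : ℤ) : ℤ) : ℂ)
        = (1 - ζ) * (Polynomial.aeval ζ (-P)) := by
      rw [map_neg]
      apply mul_left_cancel₀ hne1
      push_cast at hP ⊢
      linear_combination -hP
    have hdvd := StmtAux.lambda_dvd_int hq hζ _ (-P) hkey
    have hqp : Prime (q : ℤ) := Nat.prime_iff_prime_int.mp hq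
    rcases hqp.dvd_mul.mp hdvd with hd | hd
    · exact absurd (hqp.dvd_of_dvd_pow hd) hmn
    · have hdr : q ∣ r := Int.natCast_dvd_natCast.mp hd
      have hr0 : r = 0 := by
        rcases Nat.eq_zero_or_pos r with h0 | hpos
        · exact h0
        · exact absurd (Nat.le_of_dvd hpos hdr) (by omega)
      have hemod : e % (q : ℤ) = 0 := by omega
      exact hiff.mpr (Int.dvd_of_emod_eq_zero hemod)
end

section
/- Let q be an odd prime. Then every coefficient of the polynomial f_q(x) − (x − x^q) lies in qℤ_(q); that is, f_q(x) ≡ x − x^q (mod q) as polynomials with coefficients in ℤ_(q). In particular, f_q(c) ∈ qℤ_(q) for every c ∈ ℤ_(q). -/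
open Finset Polynomial

/-!
Grouping the triple sum by `k`, `fqCoeff q t = ∑ₖ (-1)^k C(t,k) · fqWeight q k`, where
`fqWeight q k = ∑ⱼ j · (k/j mod q) ≡ (q - 1) k ≡ -k (mod q)`. For `1 ≤ t < q` this gives
`fqCoeff q t ≡ -∑ₖ (-1)^k k C(t,k) = [t = 1] (mod q)`, and `t` is a `q`-adic unit. For `t = q`,
`k C(q,k) = q C(q-1,k-1)` and `C(q-1,k-1) ≡ (-1)^(k-1) (mod q)` make every term `≡ q (mod q²)`,
so `fqCoeff q q ≡ (q - 1) q ≡ -q (mod q²)`. Since `x ∈ c ℤ_(q)` means `‖x‖_q ≤ ‖c‖_q`, all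
coefficients of `f_q - (X - X^q)` lie in `q ℤ_(q)`; the claim on `f_q(c)` follows from the
ultrametric inequality and Fermat's little theorem `c ≡ c^q` in `ℤ_q`.
-/

theorem Int.alternating_sum_range_mul_choose (n : ℕ) :
    ∑ k ∈ Finset.range (n + 2), (-1 : ℤ) ^ k * k * (n + 1).choose k = if n = 0 then -1 else 0 := by
  have hterm (i : ℕ) : (-1 : ℤ) ^ (i + 1) * (i + 1 : ℕ) * (n + 1).choose (i + 1)
      = -(n + 1) * ((-1) ^ i * n.choose i) := by
    have h : ((n : ℤ) + 1) * n.choose i = (n + 1).choose (i + 1) * (i + 1) := by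
      exact_mod_cast Nat.add_one_mul_choose_eq n i
    rw [pow_succ]
    push_cast
    linear_combination (-1 : ℤ) ^ i * h
  rw [sum_range_succ', sum_congr rfl fun i _ => hterm i, ← mul_sum,
    Int.alternating_sum_range_choose]
  split_ifs <;> simp_all

theorem Int.alternating_sum_Icc_mul_choose {t N : ℕ} (ht : 1 ≤ t) (htN : t ≤ N) :
    ∑ k ∈ Icc 1 N, (-1 : ℤ) ^ k * k * t.choose k = if t = 1 then -1 else 0 := by
  obtain ⟨n, rfl⟩ := Nat.exists_eq_add_of_le' ht
  have hIcc : Icc 1 N ⊆ Finset.range (N + 1) := fun k hk => by simp at hk ⊢; omega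
  have hrange : Finset.range (n + 2) ⊆ Finset.range (N + 1) :=
    Finset.range_subset_range.2 (by omega)
  rw [sum_subset hIcc, ← sum_subset hrange, Int.alternating_sum_range_mul_choose]
  · simp
  · intro k _ hk
    rw [Nat.choose_eq_zero_of_lt (by simp at hk; omega)]
    simp
  · intro k hk hk'
    obtain rfl : k = 0 := by simp at hk hk'; omega
    simp

theorem Polynomial.norm_eval_le_of_forall_norm_coeff_le {K : Type*} [SeminormedRing K]
    [NormOneClass K] [IsUltrametricDist K] (P : K[X]) {c : K} (hc : ‖c‖ ≤ 1) {r : ℝ}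
    (hr : 0 ≤ r) (h : ∀ i, ‖P.coeff i‖ ≤ r) : ‖P.eval c‖ ≤ r := by
  rw [eval_eq_sum_range]
  refine IsUltrametricDist.norm_sum_le_of_forall_le_of_nonneg hr fun i _ => ?_
  have hci : ‖c ^ i‖ ≤ 1 := (norm_pow_le _ _).trans (pow_le_one₀ (norm_nonneg _) hc)
  calc ‖P.coeff i * c ^ i‖ ≤ r * 1 :=
        (norm_mul_le _ _).trans (mul_le_mul (h i) hci (norm_nonneg _) hr)
    _ = r := mul_one r

section Prime

variable {p : ℕ} [Fact p.Prime]

theorem ZMod.natCast_sub_one_choose {i : ℕ} (hi : i < p) :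
    (((p - 1).choose i : ℕ) : ZMod p) = (-1) ^ i := by
  induction i with
  | zero => simp
  | succ i ih =>
    have hpascal : (p - 1).choose i + (p - 1).choose (i + 1) = p.choose (i + 1) := by
      rw [← Nat.choose_succ_succ', Nat.sub_add_cancel (Fact.out : p.Prime).one_le]
    have hdvd : ((p.choose (i + 1) : ℕ) : ZMod p) = 0 :=
      (ZMod.natCast_eq_zero_iff _ _).2 ((Fact.out : p.Prime).dvd_choose_self i.succ_ne_zero hi)
    rw [← hpascal, Nat.cast_add, ih (by omega)] at hdvd
    rw [pow_succ]
    linear_combination hdvd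

theorem ZMod.natCast_ne_zero_of_mem_Icc {j : ℕ} (hj : j ∈ Icc 1 (p - 1)) : (j : ZMod p) ≠ 0 := by
  rw [Ne, ZMod.natCast_eq_zero_iff]
  exact Nat.not_dvd_of_pos_of_lt (by simp at hj; omega) (by simp at hj; omega)

theorem ZMod.natCast_eq_mul_natCast_iff {j k l : ℕ} (hj : j ∈ Icc 1 (p - 1))
    (hl : l ∈ Icc 1 (p - 1)) : (k : ZMod p) = j * l ↔ l = ((j : ZMod p)⁻¹ * k).val := by
  rw [eq_comm, ← eq_inv_mul_iff_mul_eq₀ (ZMod.natCast_ne_zero_of_mem_Icc hj)]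
  constructor
  · intro h
    rw [← h, ZMod.val_natCast_of_lt (by simp at hl; omega)]
  · intro h
    rw [h, ZMod.natCast_zmod_val]

theorem ZMod.val_inv_mul_mem_Icc {j k : ℕ} (hj : j ∈ Icc 1 (p - 1)) (hk : k ∈ Icc 1 (p - 1)) :
    ((j : ZMod p)⁻¹ * k).val ∈ Icc 1 (p - 1) := by
  have hne : (j : ZMod p)⁻¹ * k ≠ 0 := mul_ne_zero
    (inv_ne_zero (ZMod.natCast_ne_zero_of_mem_Icc hj)) (ZMod.natCast_ne_zero_of_mem_Icc hk)
  rw [mem_Icc, Nat.one_le_iff_ne_zero, Ne, ZMod.val_eq_zero]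
  exact ⟨hne, Nat.le_sub_one_of_lt (ZMod.val_lt _)⟩

theorem PadicInt.norm_sub_pow_le (z : ℤ_[p]) : ‖z - z ^ p‖ ≤ (p : ℝ)⁻¹ := by
  have hker : z - z ^ p ∈ RingHom.ker (PadicInt.toZMod : ℤ_[p] →+* ZMod p) := by
    rw [RingHom.mem_ker, map_sub, map_pow, ZMod.pow_card, sub_self]
  rw [PadicInt.ker_toZMod, PadicInt.maximalIdeal_eq_span_p, Ideal.mem_span_singleton] at hker
  obtain ⟨y, hy⟩ := hker
  rw [hy, norm_mul, PadicInt.norm_p]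
  exact mul_le_of_le_one_right (by positivity) y.norm_le_one

theorem Padic.norm_natCast_mul_intCast_div_le (m : ℤ) {n : ℕ} (hn : ¬p ∣ n) :
    ‖((p * m / n : ℚ) : ℚ_[p])‖ ≤ (p : ℝ)⁻¹ := by
  have hn1 : ‖(n : ℚ_[p])‖ = 1 :=
    Padic.norm_natCast_eq_one_iff.2 ((Nat.Prime.coprime_iff_not_dvd Fact.out).2 hn)
  push_cast
  rw [norm_div, norm_mul, Padic.norm_p, hn1, div_one]
  exact mul_le_of_le_one_right (by positivity) (Padic.norm_int_le_one m)

theorem zLocSpan_iff_norm_le {c x : ℚ} (hc : c ≠ 0) :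
    zLocSpan p c x ↔ ‖(x : ℚ_[p])‖ ≤ ‖(c : ℚ_[p])‖ := by
  constructor
  · rintro ⟨a, b, hb, hxb⟩
    have hb1 : ‖(b : ℚ_[p])‖ = 1 :=
      le_antisymm (Padic.norm_int_le_one b) (not_lt.1 (mt Padic.norm_intCast_lt_one_iff.1 hb))
    have hnorm := congrArg (fun y : ℚ => ‖(y : ℚ_[p])‖) hxb
    simp only [Rat.cast_mul, Rat.cast_intCast, norm_mul, hb1, mul_one] at hnorm
    rw [hnorm]
    exact mul_le_of_le_one_right (norm_nonneg _) (Padic.norm_int_le_one a)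
  · intro hx
    have hy : ‖((x / c : ℚ) : ℚ_[p])‖ ≤ 1 := by
      rw [Rat.cast_div, norm_div]
      exact div_le_one_of_le₀ hx (norm_nonneg _)
    have hden := PadicInt.norm_natCast_eq_one_iff.1
      (PadicInt.isUnit_iff.1 (PadicInt.isUnit_den _ hy))
    refine ⟨(x / c).num, (x / c).den, ?_, ?_⟩
    · rw [Int.natCast_dvd_natCast]
      exact (Nat.Prime.coprime_iff_not_dvd Fact.out).1 hden
    · rw [Int.cast_natCast, ← Rat.mul_den_eq_num, ← mul_assoc, mul_div_cancel₀ x hc]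

end Prime

def fqWeight (q k : ℕ) : ℤ := ∑ j ∈ Icc 1 (q - 1), (j : ℤ) * (((j : ZMod q)⁻¹ * k).val : ℤ)

theorem fqPoly_coeff (q t : ℕ) :
    (fqPoly q).coeff t = if t ∈ Icc 1 q then (fqCoeff q t : ℚ) / t else 0 := by
  simp only [fqPoly, finsetSum_coeff, coeff_C_mul, coeff_X_pow, mul_ite, mul_one, mul_zero,
    sum_ite_eq]

section FqCoeff

variable {q : ℕ} [Fact q.Prime]

theorem fqCoeff_eq_sum_fqWeight (t : ℕ) :
    fqCoeff q t = ∑ k ∈ Icc 1 (q - 1), (-1) ^ k * t.choose k * fqWeight q k := by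
  rw [fqCoeff, sum_comm]
  refine sum_congr rfl fun k hk => ?_
  rw [fqWeight, mul_sum]
  refine sum_congr rfl fun j hj => ?_
  rw [sum_congr rfl fun l hl => if_congr (ZMod.natCast_eq_mul_natCast_iff hj hl) rfl rfl,
    sum_ite_eq', if_pos (ZMod.val_inv_mul_mem_Icc hj hk)]
  ring

theorem fqWeight_cast (k : ℕ) : (fqWeight q k : ZMod q) = -k := by
  have hterm : ∀ j ∈ Icc 1 (q - 1), (j : ZMod q) * (((j : ZMod q)⁻¹ * k).val : ZMod q) = k :=
    fun j hj => by
      rw [ZMod.natCast_zmod_val, mul_inv_cancel_left₀ (ZMod.natCast_ne_zero_of_mem_Icc hj)]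
  push_cast [fqWeight]
  rw [sum_congr rfl hterm, sum_const, Nat.card_Icc, nsmul_eq_mul, Nat.add_sub_cancel,
    Nat.cast_pred (Fact.out : q.Prime).pos, ZMod.natCast_self]
  ring

theorem fqCoeff_modEq {t : ℕ} (ht1 : 1 ≤ t) (htq : t < q) :
    fqCoeff q t ≡ if t = 1 then 1 else 0 [ZMOD q] := by
  have hcast : ((fqCoeff q t : ℤ) : ZMod q)
      = -((∑ k ∈ Icc 1 (q - 1), (-1) ^ k * k * t.choose k : ℤ) : ZMod q) := by
    push_cast [fqCoeff_eq_sum_fqWeight, fqWeight_cast]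
    rw [← sum_neg_distrib]
    exact sum_congr rfl fun _ _ => by ring
  rw [← ZMod.intCast_eq_intCast_iff, hcast,
    Int.alternating_sum_Icc_mul_choose ht1 (Nat.le_sub_one_of_lt htq)]
  split_ifs <;> simp

theorem neg_one_pow_mul_choose_mul_fqWeight_modEq {k : ℕ} (hk : k ∈ Icc 1 (q - 1)) :
    (-1) ^ k * q.choose k * fqWeight q k ≡ q [ZMOD q ^ 2] := by
  have hq := (Fact.out : q.Prime)
  obtain ⟨hk1, hkq⟩ : 1 ≤ k ∧ k < q := by simp at hk; omega
  have hcofactor : (-1) ^ k * (q - 1).choose (k - 1) * fqWeight q k ≡ k [ZMOD q] := by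
    obtain ⟨m, rfl⟩ := Nat.exists_eq_add_of_le' hk1
    have hsign : (-1 : ZMod q) ^ (m + 1) * (-1) ^ m = -1 := by
      rw [← pow_add, show m + 1 + m = 2 * m + 1 by ring, pow_succ, pow_mul]
      simp
    rw [← ZMod.intCast_eq_intCast_iff]
    push_cast
    rw [ZMod.natCast_sub_one_choose (by omega), fqWeight_cast]
    push_cast
    linear_combination (-(m : ZMod q) - 1) * hsign
  have hchoose : (k : ℤ) * q.choose k = q * (q - 1).choose (k - 1) := by
    have := Nat.add_one_mul_choose_eq (q - 1) (k - 1)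
    rw [Nat.sub_add_cancel hq.one_le, Nat.sub_add_cancel hk1] at this
    rw [mul_comm]
    exact_mod_cast this.symm
  have hcop : Int.gcd ((q : ℤ) ^ 2) k = 1 := by
    have : Nat.Coprime (q ^ 2) k :=
      Nat.Coprime.pow_left 2 (hq.coprime_iff_not_dvd.2 (Nat.not_dvd_of_pos_of_lt hk1 hkq))
    exact_mod_cast this
  have hmul : (k : ℤ) * ((-1) ^ k * q.choose k * fqWeight q k) ≡ k * q [ZMOD q ^ 2] :=
    calc (k : ℤ) * ((-1) ^ k * q.choose k * fqWeight q k)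
        = q * ((-1) ^ k * (q - 1).choose (k - 1) * fqWeight q k) := by
          linear_combination ((-1) ^ k * fqWeight q k) * hchoose
      _ ≡ q * k [ZMOD q ^ 2] := sq (q : ℤ) ▸ Int.ModEq.mul_left' hcofactor
      _ = k * q := mul_comm _ _
  simpa [hcop] using Int.ModEq.cancel_left_div_gcd (pow_pos (by exact_mod_cast hq.pos) 2) hmul

theorem fqCoeff_self_modEq : fqCoeff q q ≡ -q [ZMOD q ^ 2] := by
  rw [fqCoeff_eq_sum_fqWeight]
  refine (Int.ModEq.sum fun k hk => neg_one_pow_mul_choose_mul_fqWeight_modEq hk).trans ?_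
  rw [sum_const, Nat.card_Icc, nsmul_eq_mul, Nat.add_sub_cancel, Int.modEq_iff_dvd]
  exact ⟨-1, by push_cast [Nat.cast_pred (Fact.out : q.Prime).pos]; ring⟩

theorem norm_fqCoeff_div_sub_le {t : ℕ} (ht1 : 1 ≤ t) (htq : t < q) :
    ‖(((fqCoeff q t / t - if t = 1 then 1 else 0 : ℚ)) : ℚ_[q])‖ ≤ (q : ℝ)⁻¹ := by
  obtain ⟨m, hm⟩ := (fqCoeff_modEq ht1 htq).symm.dvd
  have hm' := congrArg (Int.cast : ℤ → ℚ) (sub_eq_iff_eq_add'.1 hm)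
  push_cast at hm'
  have hcoeff : (fqCoeff q t : ℚ) / t - (if t = 1 then 1 else 0) = q * m / t := by
    rw [hm']
    rcases eq_or_ne t 1 with rfl | h1
    · simp
    · simp [h1]
  rw [hcoeff]
  exact Padic.norm_natCast_mul_intCast_div_le m (Nat.not_dvd_of_pos_of_lt ht1 htq)

theorem norm_fqCoeff_self_div_add_one_le :
    ‖(((fqCoeff q q / q + 1 : ℚ)) : ℚ_[q])‖ ≤ (q : ℝ)⁻¹ := by
  have hq := (Fact.out : q.Prime)
  obtain ⟨m, hm⟩ := (fqCoeff_self_modEq (q := q)).symm.dvd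
  have hm' := congrArg (Int.cast : ℤ → ℚ) (sub_eq_iff_eq_add'.1 hm)
  push_cast at hm'
  have hcoeff : (fqCoeff q q : ℚ) / q + 1 = q * m / (1 : ℕ) := by
    have hq0 : (q : ℚ) ≠ 0 := by exact_mod_cast hq.ne_zero
    rw [hm']
    field_simp
    ring
  rw [hcoeff]
  exact Padic.norm_natCast_mul_intCast_div_le m hq.not_dvd_one

theorem norm_coeff_fqPoly_sub_le (t : ℕ) :
    ‖(((fqPoly q - (X - X ^ q)).coeff t : ℚ) : ℚ_[q])‖ ≤ (q : ℝ)⁻¹ := by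
  have hq := (Fact.out : q.Prime)
  rw [coeff_sub, coeff_sub, fqPoly_coeff, coeff_X, coeff_X_pow]
  by_cases ht : t ∈ Icc 1 q
  · obtain ⟨ht1, htq⟩ := mem_Icc.1 ht
    rw [if_pos ht]
    rcases htq.lt_or_eq with htq | rfl
    · simpa [htq.ne, @eq_comm ℕ 1 t] using norm_fqCoeff_div_sub_le ht1 htq
    · simpa [hq.one_lt.ne, sub_eq_add_neg] using norm_fqCoeff_self_div_add_one_le (q := t)
  · have h1 : ¬1 = t := fun h => ht (mem_Icc.2 ⟨h.le, h ▸ hq.one_le⟩)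
    have hq' : ¬t = q := fun h => ht (mem_Icc.2 ⟨h ▸ hq.one_le, h.le⟩)
    rw [if_neg ht, if_neg h1, if_neg hq']
    simp

end FqCoeff

theorem stmt13_general (q : ℕ) (hq : q.Prime) :
    (∀ t : ℕ, zLocSpan q (q : ℚ) ((fqPoly q - (Polynomial.X - Polynomial.X ^ q)).coeff t)) ∧
      ∀ c : ℚ, zLocSpan q 1 c → zLocSpan q (q : ℚ) ((fqPoly q).eval c) := by
  have := Fact.mk hq
  have hq0 : (q : ℚ) ≠ 0 := by exact_mod_cast hq.ne_zero
  have hnorm_q : ‖((q : ℚ) : ℚ_[q])‖ = (q : ℝ)⁻¹ := by rw [Rat.cast_natCast, Padic.norm_p]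
  refine ⟨fun t => (zLocSpan_iff_norm_le hq0).2 (hnorm_q ▸ norm_coeff_fqPoly_sub_le t),
    fun c hc => ?_⟩
  rw [zLocSpan_iff_norm_le one_ne_zero, Rat.cast_one, norm_one] at hc
  rw [zLocSpan_iff_norm_le hq0, hnorm_q]
  have hsplit : (fqPoly q).eval c = (fqPoly q - (X - X ^ q)).eval c + (c - c ^ q) := by simp
  have heval := norm_eval_le_of_forall_norm_coeff_le
    ((fqPoly q - (X - X ^ q)).map (Rat.castHom ℚ_[q])) (c := Rat.castHom ℚ_[q] c) hc
    (inv_nonneg.2 q.cast_nonneg) fun i => by rw [coeff_map]; exact norm_coeff_fqPoly_sub_le i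
  rw [eval_map, eval₂_at_apply] at heval
  rw [hsplit, Rat.cast_add]
  refine (IsUltrametricDist.norm_add_le_max _ _).trans (max_le heval ?_)
  push_cast
  exact PadicInt.norm_sub_pow_le ⟨c, hc⟩

theorem stmt13 (q : ℕ) (hq : q.Prime) (hodd : Odd q) :
    (∀ t : ℕ, zLocSpan q (q : ℚ) ((fqPoly q - (Polynomial.X - Polynomial.X ^ q)).coeff t)) ∧
      ∀ c : ℚ, zLocSpan q 1 c → zLocSpan q (q : ℚ) ((fqPoly q).eval c) :=
  stmt13_general q hq
end

section
/- Let q be an odd prime and let f̄_q denote the polynomial over ℤ/q²ℤ obtained by reducing the coefficients of f_q ∈ ℤ_(q)[x] modulo q². Then S_q = { b ∈ ℤ/q²ℤ : f̄_q(b) = 0 }. -/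
open Finset Polynomial

section AuxStmt14

lemma ratToZMod_mul_eq (N : ℕ) (x : ℚ) (m b : ℤ) (hb0 : b ≠ 0)
    (hb : IsUnit (b : ZMod N)) (h : x * (b : ℚ) = (m : ℚ)) :
    ratToZMod N x * (b : ZMod N) = (m : ZMod N) := by
  have hden0 : (x.den : ℚ) ≠ 0 := by exact_mod_cast x.den_nz
  have hb0' : (b : ℚ) ≠ 0 := by exact_mod_cast hb0
  have hnum : x.num * b = m * (x.den : ℤ) := by
    have h2 : ((x.num : ℚ) / (x.den : ℚ)) * b = m := by rw [Rat.num_div_den x]; exact h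
    have h3 : (x.num : ℚ) * b = m * x.den := by field_simp at h2; linarith [h2]
    exact_mod_cast h3
  have hdvd : (x.den : ℤ) ∣ b := by
    have hx : x = (m : ℚ) / (b : ℚ) := by rw [eq_div_iff hb0']; exact h
    have := Rat.den_dvd m b
    rwa [Rat.divInt_eq_div, ← hx] at this
  obtain ⟨c, hc⟩ := hdvd
  have hdenU : IsUnit ((x.den : ℕ) : ZMod N) := by
    have hcast : (b : ZMod N) = ((x.den : ℕ) : ZMod N) * ((c : ZMod N)) := by
      have := congrArg (fun z : ℤ => (z : ZMod N)) hc
      push_cast at this; exact this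
    exact isUnit_of_mul_isUnit_left (hcast ▸ hb)
  have hnum' : (x.num : ZMod N) * (b : ZMod N) = (m : ZMod N) * ((x.den : ℕ) : ZMod N) := by
    have := congrArg (fun z : ℤ => (z : ZMod N)) hnum
    push_cast at this; exact this
  unfold ratToZMod
  have e1 : (x.num : ZMod N) * ((x.den : ℕ) : ZMod N)⁻¹ * (b : ZMod N)
      = ((x.den : ℕ) : ZMod N)⁻¹ * ((x.num : ZMod N) * (b : ZMod N)) := by ring
  rw [e1, hnum', show ((x.den:ℕ):ZMod N)⁻¹ * ((m:ZMod N) * ((x.den:ℕ):ZMod N))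
      = (m:ZMod N) * (((x.den:ℕ):ZMod N)⁻¹ * ((x.den:ℕ):ZMod N)) from by ring,
    ZMod.inv_mul_of_unit _ hdenU, mul_one]

lemma ratToZMod_int (N : ℕ) (m : ℤ) : ratToZMod N (m : ℚ) = (m : ZMod N) := by
  have := ratToZMod_mul_eq N (m:ℚ) m 1 one_ne_zero (by simp) (by push_cast; ring)
  simpa using this

lemma qmulInt (q : ℕ) (x y : ℤ) (h : ((x : ZMod q)) = (y : ZMod q)) :
    (q : ZMod (q^2)) * (x : ZMod (q^2)) = (q : ZMod (q^2)) * (y : ZMod (q^2)) := by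
  have hd : (q:ℤ) ∣ (x - y) := by
    rwa [← ZMod.intCast_zmod_eq_zero_iff_dvd, Int.cast_sub, sub_eq_zero]
  obtain ⟨c, hc⟩ := hd
  have hdd : ((q^2 : ℕ) : ℤ) ∣ (q * x - q * y) := ⟨c, by push_cast; rw [← mul_sub, hc]; ring⟩
  have h2 : ((q*x - q*y : ℤ) : ZMod (q^2)) = 0 := (ZMod.intCast_zmod_eq_zero_iff_dvd _ _).mpr hdd
  push_cast at h2
  rw [sub_eq_zero] at h2
  exact h2

lemma qmulNat (q : ℕ) (x y : ℕ) (h : ((x : ZMod q)) = (y : ZMod q)) :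
    (q : ZMod (q^2)) * (x : ZMod (q^2)) = (q : ZMod (q^2)) * (y : ZMod (q^2)) := by
  have := qmulInt q x y (by push_cast; exact_mod_cast h)
  push_cast at this; exact this

lemma pow_add_eps {R : Type*} [CommRing R] (a x : R) (hx : x * x = 0) (t : ℕ) :
    (a + x)^t = a^t + t * a^(t-1) * x := by
  induction t with
  | zero => simp
  | succ n ih =>
    rcases Nat.eq_zero_or_pos n with rfl | hn
    · simp
    · have hn1 : n - 1 + 1 = n := by omega
      have h1 : a^(n-1) * a = a^n := by rw [← pow_succ, hn1]
      have : (a+x)^(n+1) = a^n*a + (n:R)*(a^(n-1)*a)*x + a^n*x + (n:R)*a^(n-1)*(x*x) := by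
        rw [pow_succ, ih]; ring
      rw [this, h1, hx, Nat.add_sub_cancel]
      push_cast
      ring

lemma hnzIcc {q : ℕ} (hq : q.Prime) {x : ℕ} (hx : x ∈ Finset.Icc 1 (q-1)) : (x : ZMod q) ≠ 0 := by
  intro h
  rw [ZMod.natCast_eq_zero_iff] at h
  simp only [Finset.mem_Icc] at hx
  have h2 := Nat.le_of_dvd (by omega) h
  have h3 := hq.two_le
  omega

lemma wcast {q : ℕ} [NeZero q] (j k : ℕ) :
    (((((j : ZMod q))⁻¹ * (k : ZMod q)).val : ℕ) : ZMod q) = ((j : ZMod q))⁻¹ * (k : ZMod q) :=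
  ZMod.natCast_rightInverse _

lemma collapse {q : ℕ} (hq : q.Prime) {R : Type*} [AddCommMonoid R] (g : ℕ → ℕ → R) {j : ℕ}
    (hj : j ∈ Finset.Icc 1 (q-1)) :
    (∑ k ∈ Finset.Icc 1 (q-1), ∑ l ∈ Finset.Icc 1 (q-1),
      if (k : ZMod q) = (j : ZMod q) * (l : ZMod q) then g k l else 0)
    = ∑ k ∈ Finset.Icc 1 (q-1), g k (((j : ZMod q)⁻¹ * (k : ZMod q)).val) := by
  haveI : Fact q.Prime := ⟨hq⟩
  refine Finset.sum_congr rfl fun k hk => ?_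
  have hj0 := hnzIcc hq hj
  have hk0 := hnzIcc hq hk
  set w : ZMod q := (j : ZMod q)⁻¹ * (k : ZMod q) with hw
  have hwnz : w ≠ 0 := by
    intro h
    rcases mul_eq_zero.mp h with h | h
    · exact hj0 (inv_eq_zero.mp h)
    · exact hk0 h
  have hwcast : ((w.val : ℕ) : ZMod q) = w := ZMod.natCast_rightInverse w
  have hmem : w.val ∈ Finset.Icc 1 (q-1) := by
    simp only [Finset.mem_Icc]
    have h1 : w.val ≠ 0 := fun h => hwnz ((ZMod.val_eq_zero w).mp h)
    have h2 := ZMod.val_lt w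
    omega
  rw [Finset.sum_eq_single_of_mem w.val hmem]
  · rw [if_pos]
    rw [hwcast, hw, mul_inv_cancel_left₀ hj0]
  · intro l hl hne
    rw [if_neg]
    intro hcond
    apply hne
    have hlw : (l : ZMod q) = w := by
      rw [hw, hcond, inv_mul_cancel_left₀ hj0]
    have hlq : l < q := by
      simp only [Finset.mem_Icc] at hl
      have := hq.two_le; omega
    have := congrArg ZMod.val hlw
    rwa [ZMod.val_cast_of_lt hlq] at this

lemma chooseSub {q : ℕ} (hq : q.Prime) : ∀ k, k ≤ q - 1 → (((q-1).choose k : ℕ) : ZMod q) = (-1)^k := by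
  haveI : Fact q.Prime := ⟨hq⟩
  obtain ⟨p, rfl⟩ : ∃ p, q = p + 1 := ⟨q - 1, by have := hq.two_le; omega⟩
  simp only [Nat.add_sub_cancel]
  intro k
  induction k with
  | zero => simp
  | succ n ih =>
    intro hn
    have h1 : p.choose n + p.choose (n+1) = (p+1).choose (n+1) := (Nat.choose_succ_succ _ _).symm
    have h2 : (((p+1).choose (n+1) : ℕ) : ZMod (p+1)) = 0 :=
      (ZMod.natCast_eq_zero_iff _ _).mpr (hq.dvd_choose_self (by omega) (by omega))
    have h3 := congrArg (fun z : ℕ => (z : ZMod (p+1))) h1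
    push_cast at h3
    rw [h2, ih (by omega)] at h3
    have : ((p.choose (n+1) : ℕ) : ZMod (p+1)) = -(-1)^n := by linear_combination h3
    rw [this, pow_succ]
    ring

lemma altInt (t : ℕ) (ht : 1 ≤ t) :
    ∑ k ∈ Finset.range (t+1), (-1:ℤ)^k * k * t.choose k = if t = 1 then -1 else 0 := by
  obtain ⟨s, rfl⟩ : ∃ s, t = s + 1 := ⟨t - 1, by omega⟩
  rw [Finset.sum_range_succ']
  simp only [Nat.cast_zero, mul_zero, zero_mul, add_zero]
  have hterm : ∀ m, (-1:ℤ)^(m+1) * ((m+1 : ℕ) : ℤ) * (((s+1).choose (m+1) : ℕ) : ℤ)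
      = -(s+1) * ((-1)^m * s.choose m) := by
    intro m
    have hid : (s+1) * s.choose m = (s+1).choose (m+1) * (m+1) := Nat.add_one_mul_choose_eq s m
    have h5 : ((s+1 : ℕ) : ℤ) * s.choose m = ((s+1).choose (m+1) : ℤ) * (m+1) := by exact_mod_cast hid
    push_cast at h5 ⊢
    rw [pow_succ]
    linear_combination ((-1:ℤ)^m) * h5
  rw [Finset.sum_congr rfl fun m _ => hterm m, ← Finset.mul_sum,
    Int.alternating_sum_range_choose]
  rcases Nat.eq_zero_or_pos s with rfl | hs
  · simp
  · rw [if_neg (by omega), if_neg (by omega)]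
    ring

lemma altIcc {q : ℕ} (hq : q.Prime) {t : ℕ} (ht : 1 ≤ t) (ht' : t ≤ q - 1) :
    ∑ k ∈ Finset.Icc 1 (q-1), (-1:ℤ)^k * k * t.choose k = if t = 1 then -1 else 0 := by
  have hsub : Finset.Icc 1 t ⊆ Finset.Icc 1 (q-1) := Finset.Icc_subset_Icc_right ht'
  have h1 : ∑ k ∈ Finset.Icc 1 (q-1), (-1:ℤ)^k * k * t.choose k
      = ∑ k ∈ Finset.Icc 1 t, (-1:ℤ)^k * k * t.choose k := by
    refine (Finset.sum_subset hsub fun k hk hk' => ?_).symm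
    simp only [Finset.mem_Icc] at hk hk'
    rw [Nat.choose_eq_zero_of_lt (by omega)]
    simp
  have h2 : Finset.range (t+1) = insert 0 (Finset.Icc 1 t) := by
    ext x; simp [Finset.mem_range, Finset.mem_insert, Finset.mem_Icc]; omega
  have h3 := altInt t ht
  rw [h2, Finset.sum_insert (by simp)] at h3
  simpa using h1.trans (by simpa using h3)

lemma coeffLt {q : ℕ} (hq : q.Prime) {t : ℕ} (ht : 1 ≤ t) (ht' : t ≤ q - 1) :
    ((fqCoeff q t : ℤ) : ZMod q) = if t = 1 then 1 else 0 := by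
  haveI : Fact q.Prime := ⟨hq⟩
  rw [fqCoeff]
  push_cast [apply_ite (fun z : ℤ => (z : ZMod q))]
  rw [Finset.sum_congr rfl (fun j hj => collapse hq
    (fun k l => (-1:ZMod q)^k * ((t.choose k : ℕ) : ZMod q) * ((j:ℕ) : ZMod q) * ((l:ℕ) : ZMod q)) hj)]
  have hterm : ∀ j ∈ Finset.Icc 1 (q-1), ∀ k ∈ Finset.Icc 1 (q-1),
      (-1:ZMod q)^k * ((t.choose k : ℕ) : ZMod q) * ((j:ℕ) : ZMod q)
        * (((((j : ZMod q))⁻¹ * (k : ZMod q)).val : ℕ) : ZMod q)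
      = (-1:ZMod q)^k * ((t.choose k : ℕ) : ZMod q) * ((k:ℕ) : ZMod q) := by
    intro j hj k hk
    rw [wcast, mul_assoc, mul_inv_cancel_left₀ (hnzIcc hq hj)]
  rw [Finset.sum_congr rfl (fun j hj => Finset.sum_congr rfl (fun k hk => hterm j hj k hk))]
  rw [Finset.sum_const]
  rw [Nat.card_Icc]
  simp only [Nat.add_sub_cancel]
  have hcard : (((q - 1 : ℕ)) : ZMod q) = -1 := by
    have h1 : 1 ≤ q := hq.one_lt.le
    push_cast [Nat.cast_sub h1]
    simp [ZMod.natCast_self]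
  rw [nsmul_eq_mul, hcard]
  have hsum : (∑ k ∈ Finset.Icc 1 (q-1), (-1:ZMod q)^k * ((t.choose k : ℕ) : ZMod q) * ((k:ℕ) : ZMod q))
      = (((∑ k ∈ Finset.Icc 1 (q-1), (-1:ℤ)^k * k * t.choose k : ℤ)) : ZMod q) := by
    push_cast
    refine Finset.sum_congr rfl fun k hk => by ring
  rw [hsum, altIcc hq ht ht']
  rcases eq_or_ne t 1 with rfl | hne
  · simp
  · simp [hne]

lemma coeffQ {q : ℕ} (hq : q.Prime) : ((fqCoeff q q : ℤ) : ZMod (q^2)) = -(q : ZMod (q^2)) := by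
  haveI : Fact q.Prime := ⟨hq⟩
  rw [fqCoeff]
  push_cast [apply_ite (fun z : ℤ => (z : ZMod (q^2)))]
  rw [Finset.sum_congr rfl (fun j hj => collapse hq
    (fun k l => (-1:ZMod (q^2))^k * ((q.choose k : ℕ) : ZMod (q^2)) * ((j:ℕ) : ZMod (q^2)) * ((l:ℕ) : ZMod (q^2))) hj)]
  have hterm : ∀ j ∈ Finset.Icc 1 (q-1), ∀ k ∈ Finset.Icc 1 (q-1),
      (-1:ZMod (q^2))^k * ((q.choose k : ℕ) : ZMod (q^2)) * ((j:ℕ) : ZMod (q^2))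
        * (((((j : ZMod q))⁻¹ * (k : ZMod q)).val : ℕ) : ZMod (q^2))
      = -(q : ZMod (q^2)) := by
    intro j hj k hk
    simp only [Finset.mem_Icc] at hj hk
    have hk1 : 1 ≤ k := hk.1
    have hkq : k < q := by have := hq.two_le; omega
    set l0 : ℕ := (((j : ZMod q))⁻¹ * (k : ZMod q)).val with hl0
    obtain ⟨ck, hck⟩ : q ∣ q.choose k := hq.dvd_choose_self (by omega) hkq
    have hjl : ((j * l0 : ℕ) : ZMod q) = ((k : ℕ) : ZMod q) := by
      push_cast
      rw [wcast, mul_inv_cancel_left₀ (hnzIcc hq (by simp only [Finset.mem_Icc]; omega))]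
    have h1 : (q : ZMod (q^2)) * ((j * l0 : ℕ) : ZMod (q^2)) = (q : ZMod (q^2)) * ((k:ℕ) : ZMod (q^2)) :=
      qmulNat q _ _ hjl
    have hid : q.choose k * k = q * ((q-1).choose (k-1)) := by
      have h := Nat.add_one_mul_choose_eq (q-1) (k-1)
      have e1 : q - 1 + 1 = q := by have := hq.two_le; omega
      have e2 : k - 1 + 1 = k := by omega
      rw [e1, e2] at h
      omega
    have h2 := qmulInt q ((q-1).choose (k-1) : ℤ) ((-1)^(k-1))
      (by push_cast; rw [chooseSub hq (k-1) (by omega)])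
    push_cast at h2
    calc (-1:ZMod (q^2))^k * ((q.choose k : ℕ) : ZMod (q^2)) * ((j:ℕ) : ZMod (q^2)) * ((l0:ℕ) : ZMod (q^2))
        = (-1:ZMod (q^2))^k * ((ck : ℕ) : ZMod (q^2)) * ((q : ZMod (q^2)) * ((j * l0 : ℕ) : ZMod (q^2))) := by
          rw [hck]; push_cast; ring
      _ = (-1:ZMod (q^2))^k * ((ck : ℕ) : ZMod (q^2)) * ((q : ZMod (q^2)) * ((k:ℕ) : ZMod (q^2))) := by rw [h1]
      _ = (-1:ZMod (q^2))^k * (((q.choose k * k : ℕ)) : ZMod (q^2)) := by rw [hck]; push_cast; ring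
      _ = (-1:ZMod (q^2))^k * ((q : ZMod (q^2)) * (((q-1).choose (k-1) : ℕ) : ZMod (q^2))) := by
          rw [hid]; push_cast; ring
      _ = (-1:ZMod (q^2))^k * ((q : ZMod (q^2)) * (-1:ZMod (q^2))^(k-1)) := by rw [h2]
      _ = (-1:ZMod (q^2))^(k + (k-1)) * (q : ZMod (q^2)) := by rw [pow_add]; ring
      _ = -(q : ZMod (q^2)) := by
          have : Odd (k + (k-1)) := by rw [Nat.odd_iff]; omega
          rw [this.neg_one_pow]; ring
  rw [Finset.sum_congr rfl (fun j hj => Finset.sum_congr rfl (fun k hk => hterm j hj k hk))]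
  rw [Finset.sum_const, Finset.sum_const, Nat.card_Icc]
  simp only [Nat.add_sub_cancel, smul_smul]
  rw [nsmul_eq_mul]
  have hone : ((((q-1) * (q-1) : ℕ)) : ZMod q) = ((1:ℕ) : ZMod q) := by
    have h1 : 1 ≤ q := hq.one_lt.le
    push_cast [Nat.cast_sub h1]
    simp [ZMod.natCast_self]
  have := qmulNat q ((q-1)*(q-1)) 1 hone
  push_cast [Nat.cast_sub hq.one_lt.le] at this ⊢
  calc ((q:ZMod (q^2)) - 1) * ((q:ZMod (q^2)) - 1) * (-(q:ZMod (q^2)))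
      = -((q : ZMod (q^2)) * (((q:ZMod (q^2))-1) * ((q:ZMod (q^2))-1))) := by ring
    _ = -((q : ZMod (q^2)) * 1) := by rw [this]
    _ = -(q : ZMod (q^2)) := by ring

end AuxStmt14

theorem stmt14 (q : ℕ) (hq : q.Prime) (hodd : Odd q) :
    Sq q = { b : ZMod (q^2) | (fqBar q).eval b = 0 } := by
  haveI : Fact q.Prime := ⟨hq⟩
  haveI : NeZero (q^2) := ⟨pow_ne_zero 2 hq.pos.ne'⟩
  have hq2 := hq.two_le
  have hq3 : 3 ≤ q := by
    have h := Nat.odd_iff.mp hodd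
    omega
  have hins : Finset.Icc 1 q = insert q (Finset.Icc 1 (q-1)) := by
    ext x; simp only [Finset.mem_Icc, Finset.mem_insert]; omega
  have hqnot : q ∉ Finset.Icc 1 (q-1) := by simp only [Finset.mem_Icc]; omega
  set c : ℕ → ZMod (q^2) := fun t => ratToZMod (q^2) ((fqCoeff q t : ℚ) / (t : ℚ)) with hcdef
  have hunit : ∀ t : ℕ, 1 ≤ t → t ≤ q-1 → IsUnit ((t : ℕ) : ZMod (q^2)) := by
    intro t h1 h2
    rw [ZMod.isUnit_iff_coprime]
    refine Nat.Coprime.pow_right 2 (Nat.Coprime.symm ?_)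
    exact (Nat.Prime.coprime_iff_not_dvd hq).mpr
      (fun hd => by have := Nat.le_of_dvd (by omega) hd; omega)
  have hct : ∀ t : ℕ, 1 ≤ t → t ≤ q-1 →
      c t * ((t : ℕ) : ZMod (q^2)) = ((fqCoeff q t : ℤ) : ZMod (q^2)) := by
    intro t h1 h2
    have ht0 : ((t:ℕ) : ℚ) ≠ 0 := Nat.cast_ne_zero.mpr (by omega)
    have := ratToZMod_mul_eq (q^2) ((fqCoeff q t : ℚ)/(t:ℚ)) (fqCoeff q t) (t : ℤ)
      (by exact_mod_cast (by omega : t ≠ 0)) (by push_cast; exact hunit t h1 h2)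
      (by push_cast; field_simp)
    push_cast at this
    exact this
  have hcoeffQ := coeffQ hq
  have hdvdq : (q:ℤ) ∣ fqCoeff q q := by
    have h0 : ((fqCoeff q q + q : ℤ) : ZMod (q^2)) = 0 := by push_cast; rw [hcoeffQ]; ring
    have h2 : ((q^2:ℕ):ℤ) ∣ (fqCoeff q q + q) := (ZMod.intCast_zmod_eq_zero_iff_dvd _ _).mp h0
    have h3 : (q:ℤ) ∣ (fqCoeff q q + q) := dvd_trans ⟨q, by push_cast; ring⟩ h2
    simpa using (dvd_sub h3 (dvd_refl (q:ℤ)))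
  obtain ⟨m, hm⟩ := hdvdq
  have hq0Q : ((q:ℕ):ℚ) ≠ 0 := Nat.cast_ne_zero.mpr (by omega)
  have hcq : c q = ((m : ℤ) : ZMod (q^2)) := by
    have he : ((fqCoeff q q : ℚ))/(q:ℚ) = ((m : ℤ) : ℚ) := by
      rw [hm]; push_cast
      rw [mul_comm, mul_div_assoc, div_self hq0Q, mul_one]
    show ratToZMod (q^2) ((fqCoeff q q : ℚ) / (q : ℚ)) = ((m : ℤ) : ZMod (q^2))
    rw [he, ratToZMod_int]
  have hmmod : ((m : ℤ) : ZMod q) = -1 := by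
    have h0 : ((q * (m+1) : ℤ) : ZMod (q^2)) = 0 := by
      push_cast
      have hf : ((fqCoeff q q : ℤ) : ZMod (q^2)) = (q : ZMod (q^2)) * ((m:ℤ) : ZMod (q^2)) := by
        rw [hm]; push_cast; ring
      rw [hf] at hcoeffQ
      linear_combination hcoeffQ
    have h1 : ((q^2 : ℕ) : ℤ) ∣ q * (m+1) := (ZMod.intCast_zmod_eq_zero_iff_dvd _ _).mp h0
    have h2 : (q:ℤ) ∣ (m+1) := by
      obtain ⟨c0, hc0⟩ := h1
      refine ⟨c0, ?_⟩
      have hqz : (q:ℤ) ≠ 0 := by exact_mod_cast (by omega : q ≠ 0)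
      have : (q:ℤ) * (m+1) = (q:ℤ) * ((q:ℤ)*c0) := by push_cast at hc0; linarith [hc0]
      exact mul_left_cancel₀ hqz this
    have h3 : ((m+1 : ℤ) : ZMod q) = 0 := (ZMod.intCast_zmod_eq_zero_iff_dvd _ _).mpr h2
    push_cast at h3
    linear_combination h3
  set φ : ZMod (q^2) →+* ZMod q := ZMod.castHom (dvd_pow_self q two_ne_zero) (ZMod q) with hphidef
  have hφ1 : φ (c 1) = 1 := by
    have h := congrArg φ (hct 1 le_rfl (by omega))
    rw [map_mul, map_natCast, map_intCast] at h
    rw [coeffLt hq le_rfl (by omega), if_pos rfl] at h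
    simpa using h
  have hφmid : ∀ t : ℕ, 2 ≤ t → t ≤ q-1 → φ (c t) = 0 := by
    intro t h1 h2
    have h := congrArg φ (hct t (by omega) h2)
    rw [map_mul, map_natCast, map_intCast] at h
    rw [coeffLt hq (by omega) h2, if_neg (by omega)] at h
    have htu : IsUnit ((t:ℕ) : ZMod q) := by
      rw [ZMod.isUnit_iff_coprime]
      exact Nat.Coprime.symm ((Nat.Prime.coprime_iff_not_dvd hq).mpr
        (fun hd => by have := Nat.le_of_dvd (by omega) hd; omega))
    calc φ (c t) = φ (c t) * (((t:ℕ):ZMod q) * ((t:ℕ):ZMod q)⁻¹) := by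
          rw [ZMod.mul_inv_of_unit _ htu, mul_one]
      _ = (φ (c t) * ((t:ℕ):ZMod q)) * ((t:ℕ):ZMod q)⁻¹ := by ring
      _ = 0 := by rw [h]; ring
  have hφq : φ (c q) = -1 := by rw [hcq, map_intCast]; exact hmmod
  have hg : ∀ b : ZMod (q^2), (fqBar q).eval b = ∑ t ∈ Finset.Icc 1 q, c t * b ^ t := by
    intro b
    rw [fqBar, Polynomial.eval_finset_sum]
    exact Finset.sum_congr rfl fun t ht => by simp [hcdef]
  have hqq : (q : ZMod (q^2)) * (q : ZMod (q^2)) = 0 := by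
    have h := ZMod.natCast_self (q^2)
    push_cast at h
    linear_combination h
  have shift : ∀ a s : ZMod (q^2), (fqBar q).eval (a + (q:ZMod (q^2)) * s)
      = (fqBar q).eval a + (q:ZMod (q^2)) * s := by
    intro a s
    have hx : ((q:ZMod (q^2)) * s) * ((q:ZMod (q^2)) * s) = 0 := by
      calc ((q:ZMod (q^2)) * s) * ((q:ZMod (q^2)) * s)
          = ((q:ZMod (q^2)) * (q:ZMod (q^2))) * (s * s) := by ring
        _ = 0 := by rw [hqq, zero_mul]
    rw [hg, hg]
    have hexp : ∀ t ∈ Finset.Icc 1 q, c t * (a + (q:ZMod (q^2)) * s)^t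
        = c t * a^t + c t * ((t:ℕ) * a^(t-1) * ((q:ZMod (q^2)) * s)) := by
      intro t ht
      rw [pow_add_eps a ((q:ZMod (q^2)) * s) hx t]
      ring
    rw [Finset.sum_congr rfl hexp, Finset.sum_add_distrib]
    congr 1
    have hterm : ∀ t ∈ Finset.Icc 1 q, c t * ((t:ℕ) * a^(t-1) * ((q:ZMod (q^2)) * s))
        = if t = 1 then (q:ZMod (q^2)) * s else 0 := by
      intro t ht
      simp only [Finset.mem_Icc] at ht
      by_cases htq : t = q
      · rw [if_neg (by omega), htq]
        calc c q * ((q:ℕ) * a^(q-1) * ((q:ZMod (q^2)) * s))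
            = ((q:ZMod (q^2)) * (q:ZMod (q^2))) * (c q * a^(q-1) * s) := by push_cast; ring
          _ = 0 := by rw [hqq, zero_mul]
      · have h2 : t ≤ q - 1 := by omega
        have key : (q:ZMod (q^2)) * ((fqCoeff q t : ℤ) : ZMod (q^2))
            = (q:ZMod (q^2)) * ((if t = 1 then 1 else 0 : ℤ) : ZMod (q^2)) := by
          apply qmulInt
          rw [coeffLt hq (by omega) h2]
          rcases eq_or_ne t 1 with rfl | hne
          · simp
          · simp [hne]
        calc c t * ((t:ℕ) * a^(t-1) * ((q:ZMod (q^2)) * s))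
            = ((q:ZMod (q^2)) * (c t * ((t:ℕ):ZMod (q^2)))) * (a^(t-1) * s) := by ring
          _ = ((q:ZMod (q^2)) * ((fqCoeff q t : ℤ) : ZMod (q^2))) * (a^(t-1) * s) := by
              rw [hct t (by omega) h2]
          _ = ((q:ZMod (q^2)) * ((if t = 1 then 1 else 0 : ℤ) : ZMod (q^2))) * (a^(t-1) * s) := by
              rw [key]
          _ = if t = 1 then (q:ZMod (q^2)) * s else 0 := by
              rcases eq_or_ne t 1 with rfl | hne
              · simp
              · simp [hne]
    rw [Finset.sum_congr rfl hterm, Finset.sum_ite_eq' (Finset.Icc 1 q) 1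
      (fun _ => (q:ZMod (q^2)) * s), if_pos (by simp only [Finset.mem_Icc]; omega)]
  have gdvd : ∀ a : ℕ, ∃ u : ZMod (q^2),
      (fqBar q).eval ((a:ℕ) : ZMod (q^2)) = (q:ZMod (q^2)) * u := by
    intro a
    have h0 : φ ((fqBar q).eval ((a:ℕ) : ZMod (q^2))) = 0 := by
      rw [hg, map_sum]
      have hterm : ∀ t ∈ Finset.Icc 1 q, φ (c t * ((a:ℕ) : ZMod (q^2))^t)
          = (if t = 1 then ((a:ℕ):ZMod q) else 0) + (if t = q then -((a:ℕ):ZMod q)^q else 0) := by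
        intro t ht
        simp only [Finset.mem_Icc] at ht
        rw [map_mul, map_pow, map_natCast]
        rcases eq_or_ne t 1 with rfl | hne1
        · rw [hφ1, if_pos rfl, if_neg (by omega)]
          simp
        · by_cases hneq : t = q
          · rw [if_neg hne1, if_pos hneq, hneq, hφq]
            ring
          · rw [hφmid t (by omega) (by omega), if_neg hne1, if_neg hneq]
            ring
      rw [Finset.sum_congr rfl hterm, Finset.sum_add_distrib,
        Finset.sum_ite_eq' _ 1 (fun _ => ((a:ℕ):ZMod q)),
        Finset.sum_ite_eq' _ q (fun _ => -((a:ℕ):ZMod q)^q),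
        if_pos (by simp only [Finset.mem_Icc]; omega),
        if_pos (by simp only [Finset.mem_Icc]; omega)]
      rw [ZMod.pow_card]
      ring
    set x := (fqBar q).eval ((a:ℕ) : ZMod (q^2)) with hx
    have h1 : ((x.val : ℕ) : ZMod (q^2)) = x := ZMod.natCast_rightInverse x
    have hval : ((x.val : ℕ) : ZMod q) = 0 := by
      rw [← h1, map_natCast] at h0
      exact h0
    obtain ⟨c0, hc0⟩ := (ZMod.natCast_eq_zero_iff _ _).mp hval
    refine ⟨((c0:ℕ) : ZMod (q^2)), ?_⟩
    rw [← h1, hc0]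
    push_cast
    ring
  have hE : ∀ a : ℕ, ratToZMod (q^2) ((a:ℚ) - (fqPoly q).eval ((a:ℕ):ℚ))
      = ((a:ℕ) : ZMod (q^2)) - (fqBar q).eval ((a:ℕ) : ZMod (q^2)) := by
    intro a
    set D : ℕ := (q-1).factorial with hD
    have hqD : ¬ q ∣ D := by
      intro hd
      have := (Nat.Prime.dvd_factorial hq).mp hd
      omega
    have hDu : IsUnit ((D:ℕ) : ZMod (q^2)) := by
      rw [ZMod.isUnit_iff_coprime]
      exact Nat.Coprime.pow_right 2
        (Nat.Coprime.symm ((Nat.Prime.coprime_iff_not_dvd hq).mpr hqD))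
    have hD0 : D ≠ 0 := Nat.factorial_ne_zero _
    set DT : ℕ → ℕ := fun t => D / t with hDT
    have hDTt : ∀ t : ℕ, 1 ≤ t → t ≤ q-1 → DT t * t = D := by
      intro t h1 h2
      exact Nat.div_mul_cancel (Nat.dvd_factorial (by omega) h2)
    set MZ : ℤ := (a:ℤ) * D - ((∑ t ∈ Finset.Icc 1 (q-1),
        fqCoeff q t * (DT t : ℤ) * (a:ℤ)^t) + m * D * (a:ℤ)^q) with hMZ
    have hevalQ : (fqPoly q).eval ((a:ℕ):ℚ)
        = ∑ t ∈ Finset.Icc 1 q, (fqCoeff q t : ℚ)/(t:ℚ) * ((a:ℕ):ℚ)^t := by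
      rw [fqPoly, Polynomial.eval_finset_sum]
      exact Finset.sum_congr rfl fun t ht => by simp
    have hmulQ : ((a:ℚ) - (fqPoly q).eval ((a:ℕ):ℚ)) * ((D:ℕ):ℚ) = ((MZ:ℤ):ℚ) := by
      rw [hevalQ, hins, Finset.sum_insert hqnot, hMZ]
      have hterm : ∀ t ∈ Finset.Icc 1 (q-1),
          (fqCoeff q t : ℚ)/(t:ℚ) * ((a:ℕ):ℚ)^t * ((D:ℕ):ℚ)
          = (fqCoeff q t : ℚ) * ((DT t : ℕ) : ℚ) * ((a:ℕ):ℚ)^t := by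
        intro t ht
        simp only [Finset.mem_Icc] at ht
        have ht0 : ((t:ℕ):ℚ) ≠ 0 := Nat.cast_ne_zero.mpr (by omega)
        have hDt : ((DT t : ℕ) : ℚ) * ((t:ℕ):ℚ) = ((D:ℕ):ℚ) := by
          exact_mod_cast congrArg (fun z : ℕ => (z:ℚ)) (hDTt t ht.1 ht.2)
        rw [div_mul_eq_mul_div, div_mul_eq_mul_div, div_eq_iff ht0]
        linear_combination (-((fqCoeff q t : ℚ) * ((a:ℕ):ℚ)^t)) * hDt
      have e1 : (∑ t ∈ Finset.Icc 1 (q-1), (fqCoeff q t : ℚ)/(t:ℚ) * ((a:ℕ):ℚ)^t) * ((D:ℕ):ℚ)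
          = ∑ t ∈ Finset.Icc 1 (q-1), (fqCoeff q t : ℚ) * ((DT t : ℕ) : ℚ) * ((a:ℕ):ℚ)^t := by
        rw [Finset.sum_mul]; exact Finset.sum_congr rfl hterm
      have hqterm : (fqCoeff q q : ℚ)/(q:ℚ) * ((a:ℕ):ℚ)^q * ((D:ℕ):ℚ)
          = ((m:ℤ):ℚ) * ((D:ℕ):ℚ) * ((a:ℕ):ℚ)^q := by
        rw [hm]
        push_cast
        field_simp
      push_cast
      linear_combination -e1 - hqterm
    have h2 : (((a:ℕ) : ZMod (q^2)) - (fqBar q).eval ((a:ℕ):ZMod (q^2))) * ((D:ℕ) : ZMod (q^2))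
        = ((MZ:ℤ) : ZMod (q^2)) := by
      rw [hg, hins, Finset.sum_insert hqnot]
      have hterm2 : ∀ t ∈ Finset.Icc 1 (q-1),
          c t * ((a:ℕ):ZMod (q^2))^t * ((D:ℕ):ZMod (q^2))
          = ((fqCoeff q t : ℤ) : ZMod (q^2)) * ((DT t : ℕ) : ZMod (q^2)) * ((a:ℕ):ZMod (q^2))^t := by
        intro t ht
        simp only [Finset.mem_Icc] at ht
        have hDt : ((DT t : ℕ) : ZMod (q^2)) * ((t:ℕ) : ZMod (q^2)) = ((D:ℕ) : ZMod (q^2)) := by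
          exact_mod_cast congrArg (fun z : ℕ => (z:ZMod (q^2))) (hDTt t ht.1 ht.2)
        calc c t * ((a:ℕ):ZMod (q^2))^t * ((D:ℕ):ZMod (q^2))
            = (c t * ((t:ℕ):ZMod (q^2))) * ((DT t:ℕ):ZMod (q^2)) * ((a:ℕ):ZMod (q^2))^t := by
              rw [← hDt]; ring
          _ = _ := by rw [hct t ht.1 ht.2]
      have e2 : (∑ t ∈ Finset.Icc 1 (q-1), c t * ((a:ℕ):ZMod (q^2))^t) * ((D:ℕ):ZMod (q^2))
          = ∑ t ∈ Finset.Icc 1 (q-1),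
              ((fqCoeff q t : ℤ):ZMod (q^2)) * ((DT t:ℕ):ZMod (q^2)) * ((a:ℕ):ZMod (q^2))^t := by
        rw [Finset.sum_mul]; exact Finset.sum_congr rfl hterm2
      rw [hMZ, hcq]
      push_cast
      linear_combination -e2
    have h1 := ratToZMod_mul_eq (q^2) ((a:ℚ) - (fqPoly q).eval ((a:ℕ):ℚ)) MZ (D:ℤ)
      (by exact_mod_cast hD0) (by push_cast; exact hDu)
      (by push_cast at hmulQ ⊢; linear_combination hmulQ)
    have hcancel : ∀ X Y : ZMod (q^2), X * ((D:ℕ):ZMod (q^2)) = Y * ((D:ℕ):ZMod (q^2)) → X = Y := by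
      intro X Y h
      have h3 := congrArg (fun z => z * ((D:ℕ):ZMod (q^2))⁻¹) h
      rwa [mul_assoc, mul_assoc, ZMod.mul_inv_of_unit _ hDu, mul_one, mul_one] at h3
    apply hcancel
    rw [h2]
    push_cast at h1 ⊢
    linear_combination h1
  ext b
  simp only [Sq, Set.mem_setOf_eq]
  constructor
  · rintro ⟨a, ha, rfl⟩
    rw [hE a]
    obtain ⟨u, hu⟩ := gdvd a
    have hb : ((a:ℕ):ZMod (q^2)) - (fqBar q).eval ((a:ℕ):ZMod (q^2))
        = ((a:ℕ):ZMod (q^2)) + (q:ZMod (q^2)) * (-u) := by rw [hu]; ring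
    rw [hb, shift ((a:ℕ):ZMod (q^2)) (-u), hu]
    ring
  · intro hb0
    set a : ℕ := b.val % q with ha
    refine ⟨a, Nat.mod_lt _ hq.pos, ?_⟩
    have hbv : ((b.val : ℕ) : ZMod (q^2)) = b := ZMod.natCast_rightInverse b
    have h4 := congrArg (fun z : ℕ => (z : ZMod (q^2))) (Nat.mod_add_div b.val q)
    push_cast at h4
    have hdecomp : b = ((a:ℕ):ZMod (q^2)) + (q:ZMod (q^2)) * ((b.val / q : ℕ) : ZMod (q^2)) := by
      conv_lhs => rw [← hbv]
      rw [ha]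
      exact h4.symm
    have hs := shift ((a:ℕ):ZMod (q^2)) ((b.val / q : ℕ) : ZMod (q^2))
    rw [← hdecomp] at hs
    rw [hb0] at hs
    rw [hE a, hdecomp]
    linear_combination -hs
end

section
/- For every integer s ≥ 1 and every rational number x with x ≠ −1, the polynomial 𝓕_s satisfies 𝓕_s(x) = (1/(x+1)) · Li_{−s}(x/(1+x)), where the right-hand side is the value at x/(1+x) of the rational function Li_{−s} (note x/(1+x) ≠ 1, so this value is a well-defined rational number). -/
open Finset Polynomial

/-!
The coefficient of `xᵗ` in `𝓕_s`, the sum of `s!/(s₁!⋯s_t!)` over the compositions of `s` into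
`t` positive parts, is `t! S(s,t)` with `S` the Stirling numbers of the second kind: Pascal's rule
`multinomial c = ∑ᵢ multinomial (c - eᵢ)` gives it the recursion of `t! S(s,t)`.
On the other side, `θ = y d/dy` acts on `g_t(y) = yᵗ/(1-y)ᵗ⁺¹` by `θ g_t = t g_t + (t+1) g_{t+1}`,
so `θ` transforms coefficients by that same recursion; this yields `Li_{-s}(y) = ∑ₜ t! S(s,t) g_t(y)` for `s ≥ 1`.
Finally `g_t(x/(1+x)) = xᵗ(1+x)`.
-/

open Nat

namespace Nat

theorem sum_update_pred {ι : Type*} [Fintype ι] [DecidableEq ι] (c : ι → ℕ) {i : ι}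
    (hi : 1 ≤ c i) : ∑ j, Function.update c i (c i - 1) j = ∑ j, c j - 1 := by
  rw [sum_update_of_mem (mem_univ i), sum_eq_add_sum_sdiff_singleton_of_mem (mem_univ i) c]
  omega

theorem prod_factorial_eq_mul_prod_factorial_update_pred {ι : Type*} [Fintype ι] [DecidableEq ι]
    (c : ι → ℕ) {i : ι} (hi : 1 ≤ c i) :
    ∏ j, (c j)! = c i * ∏ j, (Function.update c i (c i - 1) j)! := by
  simp_rw [Function.apply_update (fun _ k => k !) c i (c i - 1)]
  rw [prod_update_of_mem (mem_univ i), prod_eq_mul_prod_sdiff_singleton_of_mem (mem_univ i),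
    ← mul_assoc, mul_factorial_pred (by omega)]

theorem multinomial_eq_sum_multinomial_update_pred {ι : Type*} [Fintype ι] [DecidableEq ι]
    [Nonempty ι] (c : ι → ℕ) (hc : ∀ i, 1 ≤ c i) :
    multinomial univ c = ∑ i, multinomial univ (Function.update c i (c i - 1)) := by
  have hN : ∑ j, c j ≠ 0 := by
    obtain ⟨i⟩ := ‹Nonempty ι›
    have := single_le_sum (fun j _ => Nat.zero_le (c j)) (mem_univ i)
    have := hc i
    omega
  have key : ∀ i, (∏ j, (c j)!) * multinomial univ (Function.update c i (c i - 1))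
      = c i * (∑ j, c j - 1)! := fun i => by
    rw [prod_factorial_eq_mul_prod_factorial_update_pred c (hc i), mul_assoc, multinomial_spec,
      sum_update_pred c (hc i)]
  apply Nat.eq_of_mul_eq_mul_left (prod_pos fun j _ => factorial_pos (c j))
  rw [multinomial_spec, mul_sum, sum_congr rfl fun i _ => key i, ← sum_mul,
    mul_factorial_pred hN]

theorem multinomial_insertNth_zero {n : ℕ} (i : Fin (n + 1)) (c : Fin n → ℕ) :
    multinomial univ (i.insertNth 0 c) = multinomial univ c := by
  simp only [multinomial, Fin.sum_univ_succAbove _ i, Fin.prod_univ_succAbove _ i,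
    Fin.insertNth_apply_same, Fin.insertNth_apply_succAbove, zero_add, factorial_zero, one_mul]

end Nat

open Finset.Nat Topology

def compositionSum (s t : ℕ) : ℕ :=
  ∑ c ∈ (antidiagonalTuple t s).filter (fun c => ∀ i, 1 ≤ c i), multinomial univ c

theorem sum_multinomial_update_pred (s t : ℕ) (i : Fin (t + 1)) :
    ∑ c ∈ (antidiagonalTuple (t + 1) (s + 1)).filter (fun c => ∀ j, 1 ≤ c j),
        multinomial univ (Function.update c i (c i - 1)) =
      ∑ d ∈ (antidiagonalTuple (t + 1) s).filter (fun d => ∀ j, j ≠ i → 1 ≤ d j),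
        multinomial univ d := by
  refine sum_nbij' (fun c => Function.update c i (c i - 1))
    (fun d => Function.update d i (d i + 1)) ?_ ?_ ?_ ?_ fun _ _ => rfl
  · intro c hc
    simp only [mem_filter, mem_antidiagonalTuple] at hc ⊢
    refine ⟨by rw [sum_update_pred c (hc.2 i), hc.1]; rfl, fun j hj => ?_⟩
    rw [Function.update_of_ne hj]
    exact hc.2 j
  · intro d hd
    simp only [mem_filter, mem_antidiagonalTuple] at hd ⊢
    refine ⟨?_, fun j => ?_⟩
    · rw [sum_update_of_mem (mem_univ i), ← hd.1,
        sum_eq_add_sum_sdiff_singleton_of_mem (mem_univ i)]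
      ring
    · rcases eq_or_ne j i with rfl | hj
      · simp
      · rw [Function.update_of_ne hj]
        exact hd.2 j hj
  · intro c hc
    simp only [mem_filter, mem_antidiagonalTuple] at hc
    simp [Nat.sub_add_cancel (hc.2 i)]
  · intro d _
    simp

theorem compositionSum_eq_sum_insertNth_zero (s t : ℕ) (i : Fin (t + 1)) :
    compositionSum s t =
      ∑ d ∈ (antidiagonalTuple (t + 1) s).filter (fun d => (∀ j, j ≠ i → 1 ≤ d j) ∧ ¬ 1 ≤ d i),
        multinomial univ d := by
  refine sum_nbij' (fun c => i.insertNth 0 c) (fun d => i.removeNth d) ?_ ?_ ?_ ?_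
    fun c _ => (multinomial_insertNth_zero i c).symm
  · intro c hc
    simp only [mem_filter, mem_antidiagonalTuple] at hc ⊢
    refine ⟨?_, fun j hj => ?_, by simp⟩
    · simpa [Fin.sum_univ_succAbove _ i] using hc.1
    · obtain ⟨k, rfl⟩ := Fin.exists_succAbove_eq hj
      simpa using hc.2 k
  · intro d hd
    simp only [mem_filter, mem_antidiagonalTuple] at hd ⊢
    refine ⟨?_, fun k => hd.2.1 _ (Fin.succAbove_ne i k)⟩
    rw [← hd.1, Fin.sum_univ_succAbove _ i, show d i = 0 by omega, zero_add]
    rfl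
  · intro c _
    simp
  · intro d hd
    simp only [mem_filter, mem_antidiagonalTuple] at hd
    have hdi : d i = 0 := by omega
    exact hdi ▸ i.insertNth_self_removeNth d

theorem compositionSum_succ_succ (s t : ℕ) :
    compositionSum (s + 1) (t + 1) = (t + 1) * (compositionSum s (t + 1) + compositionSum s t) := by
  have pascal : compositionSum (s + 1) (t + 1) =
      ∑ i, ∑ c ∈ (antidiagonalTuple (t + 1) (s + 1)).filter (fun c => ∀ j, 1 ≤ c j),
        multinomial univ (Function.update c i (c i - 1)) := by
    rw [compositionSum, sum_comm]
    exact sum_congr rfl fun c hc =>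
      multinomial_eq_sum_multinomial_update_pred c (mem_filter.1 hc).2
  have split (i : Fin (t + 1)) :
      ∑ c ∈ (antidiagonalTuple (t + 1) (s + 1)).filter (fun c => ∀ j, 1 ≤ c j),
        multinomial univ (Function.update c i (c i - 1)) =
      compositionSum s (t + 1) + compositionSum s t := by
    rw [sum_multinomial_update_pred, ← sum_filter_add_sum_filter_not _ (fun d => 1 ≤ d i),
      filter_filter, filter_filter, compositionSum_eq_sum_insertNth_zero s t i, compositionSum]
    congr 2
    refine filter_congr fun d _ => ⟨fun h j => ?_, fun h => ⟨fun j _ => h j, h i⟩⟩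
    rcases eq_or_ne j i with rfl | hj
    exacts [h.2, h.1 j hj]
  rw [pascal, sum_congr rfl fun i _ => split i, sum_const, Finset.card_univ, Fintype.card_fin,
    smul_eq_mul]

theorem compositionSum_eq_factorial_mul_stirlingSecond (s t : ℕ) :
    compositionSum s t = t ! * stirlingSecond s t := by
  induction s generalizing t with
  | zero =>
    cases t with
    | zero => simp [compositionSum]
    | succ t => simp [compositionSum, antidiagonalTuple_zero_right]
  | succ s ih =>
    cases t with
    | zero => simp [compositionSum]
    | succ t =>
      rw [compositionSum_succ_succ, ih, ih, stirlingSecond_succ_succ, factorial_succ]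
      ring

theorem Fcal_eq_sum_stirlingSecond (s : ℕ) (x : ℚ) :
    Fcal s x = ∑ t ∈ range (s + 1), (t ! * stirlingSecond s t : ℚ) * x ^ t := by
  refine sum_congr rfl fun t _ => ?_
  rw [← sum_mul, ← Nat.cast_sum]
  exact_mod_cast congrArg (fun n : ℕ => (n : ℚ) * x ^ t)
    (compositionSum_eq_factorial_mul_stirlingSecond s t)

/-- The generating function `∑ₙ (n choose t) yⁿ` of the `t`-th column of Pascal's triangle. -/
def binomFrac {𝕜 : Type*} [Field 𝕜] (t : ℕ) (y : 𝕜) : 𝕜 := y ^ t / (1 - y) ^ (t + 1)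

section binomFrac

variable {𝕜 : Type*} [NontriviallyNormedField 𝕜] {y : 𝕜}

theorem hasDerivAt_binomFrac (t : ℕ) (hy : y ≠ 1) :
    HasDerivAt (binomFrac t)
      ((t * y ^ (t - 1) * (1 - y) ^ (t + 1) + y ^ t * ((t + 1) * (1 - y) ^ t)) /
        ((1 - y) ^ (t + 1)) ^ 2) y := by
  refine ((hasDerivAt_pow t y).fun_div (((hasDerivAt_id' y).const_sub 1).fun_pow (t + 1))
    (pow_ne_zero _ (sub_ne_zero.2 hy.symm))).congr_deriv ?_
  rw [Nat.add_sub_cancel]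
  push_cast
  ring

theorem mul_deriv_binomFrac (t : ℕ) (hy : y ≠ 1) :
    y * deriv (binomFrac t) y = t * binomFrac t y + (t + 1) * binomFrac (t + 1) y := by
  have h1y : 1 - y ≠ 0 := sub_ne_zero.2 hy.symm
  rw [(hasDerivAt_binomFrac t hy).deriv, binomFrac, binomFrac]
  cases t with
  | zero => field_simp; ring
  | succ t => field_simp; push_cast; ring

end binomFrac

theorem Li_succ (s : ℕ) (y : ℚ) : Li (s + 1) y = y * deriv (Li s) y := by
  rw [Li, Function.iterate_succ_apply']
  rfl

theorem sum_factorial_mul_stirlingSecond_step {R : Type*} [CommSemiring R] (s : ℕ) (g : ℕ → R) :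
    ∑ t ∈ range (s + 1), (t ! * stirlingSecond s t : R) * (t * g t + (t + 1) * g (t + 1)) =
      ∑ t ∈ range (s + 2), (t ! * stirlingSecond (s + 1) t : R) * g t := by
  have shift := (sum_range_succ (fun t => (t ! * stirlingSecond s t : R) * t * g t) (s + 1)).symm
    |>.trans (sum_range_succ' _ (s + 1))
  simp only [stirlingSecond_eq_zero_of_lt (lt_add_one s), cast_zero, mul_zero, zero_mul,
    add_zero] at shift
  simp only [mul_add, sum_add_distrib, ← mul_assoc, shift, sum_range_succ' _ (s + 1),
    stirlingSecond_succ_zero, cast_zero, mul_zero, zero_mul, add_zero]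
  rw [← sum_add_distrib]
  refine sum_congr rfl fun t _ => ?_
  rw [stirlingSecond_succ_succ, factorial_succ]
  push_cast
  ring

theorem Li_eq_sum_stirlingSecond {s : ℕ} (hs : 1 ≤ s) {y : ℚ} (hy : y ≠ 1) :
    Li s y = ∑ t ∈ range (s + 1), (t ! * stirlingSecond s t : ℚ) * binomFrac t y := by
  induction s, hs using Nat.le_induction generalizing y with
  | base =>
    have h1y : 1 - y ≠ 0 := sub_ne_zero.2 hy.symm
    have hd : HasDerivAt (fun x : ℚ => x / (1 - x)) (1 / (1 - y) ^ 2) y :=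
      ((hasDerivAt_id' y).fun_div ((hasDerivAt_id' y).const_sub 1) h1y).congr_deriv (by ring)
    rw [Li_succ, Li, Function.iterate_zero_apply, hd.deriv]
    simp [sum_range_succ, binomFrac, stirlingSecond_self, div_eq_mul_inv]
  | succ s hs ih =>
    have hev : Li s =ᶠ[𝓝 y]
        fun z => ∑ t ∈ range (s + 1), (t ! * stirlingSecond s t : ℚ) * binomFrac t z :=
      eventually_ne_nhds hy |>.mono fun z hz => ih hz
    have hdiff (t : ℕ) : DifferentiableAt ℚ (binomFrac t) y :=
      (hasDerivAt_binomFrac t hy).differentiableAt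
    rw [Li_succ, hev.deriv_eq, deriv_fun_sum fun t _ => (hdiff t).const_mul _, mul_sum,
      ← sum_factorial_mul_stirlingSecond_step]
    refine sum_congr rfl fun t _ => ?_
    rw [deriv_const_mul _ (hdiff t), mul_left_comm, mul_deriv_binomFrac t hy]

theorem binomFrac_div_one_add {K : Type*} [Field K] {x : K} (h1x : 1 + x ≠ 0) (t : ℕ) :
    binomFrac t (x / (1 + x)) = x ^ t * (1 + x) := by
  rw [binomFrac, one_sub_div h1x, add_sub_cancel_right, div_pow, div_pow, one_pow]
  field_simp
  ring

theorem stmt15 (s : ℕ) (hs : 1 ≤ s) (x : ℚ) (hx : x ≠ -1) :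
    Fcal s x = (1 / (x + 1)) * Li s (x / (1 + x)) := by
  have h1x : 1 + x ≠ 0 := fun h => hx (by linarith)
  have hy : x / (1 + x) ≠ 1 := fun h => by simp [div_eq_one_iff_eq h1x] at h
  rw [Fcal_eq_sum_stirlingSecond, Li_eq_sum_stirlingSecond hs hy, mul_sum]
  refine sum_congr rfl fun t _ => ?_
  rw [binomFrac_div_one_add h1x, add_comm x 1]
  field_simp
end

section
/- Let q be an odd prime and let k be an integer. Then Σ_{1≤j,l≤q−1, jl ≡ k (mod q)} j·l ≡ k^q · Σ_{j=1}^{q−1} j·j* (mod q²). -/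
open Finset Polynomial

lemma pow_add_sq_zero {R : Type*} [CommRing R] (x t : R) (ht : t * t = 0) (n : ℕ) :
    (x + t) ^ n = x ^ n + n * x ^ (n - 1) * t := by
  induction n with
  | zero => simp
  | succ n ih =>
    rcases Nat.eq_zero_or_pos n with h | h
    · subst h; simp [pow_succ]
    · have hx : x ^ (n - 1) * x = x ^ n := by
        rw [← pow_succ]; congr 1; omega
      rw [pow_succ, ih]
      push_cast
      linear_combination (n : R) * t * hx + (n : R) * x ^ (n - 1) * ht

lemma powq_eq {q : ℕ} {a b : ℤ} (h : (a : ZMod q) = (b : ZMod q)) :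
    ((a : ZMod (q^2)))^q = ((b : ZMod (q^2)))^q := by
  have hd : (q : ℤ) ∣ a - b := by
    rw [ZMod.intCast_eq_intCast_iff] at h
    exact (Int.ModEq.dvd h.symm)
  obtain ⟨c, hc⟩ := hd
  have ha : a = b + q * c := by linarith
  have hq2 : ((q : ZMod (q^2)) * c) * ((q : ZMod (q^2)) * c) = 0 := by
    have : ((q^2 : ℕ) : ZMod (q^2)) = 0 := ZMod.natCast_self _
    push_cast at this
    linear_combination (c : ZMod (q^2))^2 * this
  have hab : (a : ZMod (q^2)) = (b : ZMod (q^2)) + (q : ZMod (q^2)) * c := by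
    rw [ha]; push_cast; ring
  rw [hab, pow_add_sq_zero _ _ hq2]
  have hzero : (q : ZMod (q^2)) * ((q : ZMod (q^2)) * (c : ZMod (q^2))) = 0 := by
    have h0 : ((q^2 : ℕ) : ZMod (q^2)) = 0 := ZMod.natCast_self _
    push_cast at h0
    linear_combination (c : ZMod (q^2)) * h0
  calc (b:ZMod (q^2))^q + q * (b:ZMod (q^2))^(q-1) * ((q : ZMod (q^2)) * c)
      = (b:ZMod (q^2))^q + (b:ZMod (q^2))^(q-1) * ((q:ZMod (q^2)) * ((q : ZMod (q^2)) * c)) := by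
        ring
    _ = (b:ZMod (q^2))^q := by rw [hzero]; ring

lemma mul_eq_add_sub_one {q : ℕ} {x y : ZMod (q^2)} (hx : (q : ZMod (q^2)) ∣ x - 1)
    (hy : (q : ZMod (q^2)) ∣ y - 1) : x * y = x + y - 1 := by
  obtain ⟨a, ha⟩ := hx; obtain ⟨b, hb⟩ := hy
  have h0 : ((q^2 : ℕ) : ZMod (q^2)) = 0 := ZMod.natCast_self _
  push_cast at h0
  have h1 : (x - 1) * (y - 1) = 0 := by
    rw [ha, hb]
    linear_combination (a * b : ZMod (q^2)) * h0
  linear_combination h1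

lemma fermat_dvd {q : ℕ} (hq : q.Prime) (j : ℕ) :
    (q : ZMod (q^2)) ∣ ((j : ZMod (q^2))^q - (j : ZMod (q^2))) := by
  haveI := Fact.mk hq
  have h : (((j:ℤ)^q - j : ℤ) : ZMod q) = 0 := by
    push_cast
    rw [ZMod.pow_card]
    ring
  rw [ZMod.intCast_zmod_eq_zero_iff_dvd] at h
  obtain ⟨c, hc⟩ := h
  refine ⟨(c : ZMod (q^2)), ?_⟩
  have := congrArg (fun z : ℤ => (z : ZMod (q^2))) hc
  push_cast at this
  exact this

lemma isUnit_cast {q j : ℕ} (hq : q.Prime) (hj : ¬ q ∣ j) : IsUnit (j : ZMod (q^2)) := by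
  rw [ZMod.isUnit_iff_coprime]
  exact ((hq.coprime_iff_not_dvd.mpr hj).symm).pow_right 2

def beta (q j : ℕ) : ZMod (q^2) := (j : ZMod (q^2)) * ((j : ZMod (q^2))^q)⁻¹

lemma beta_pow {q : ℕ} (hq : q.Prime) {j : ℕ} (hj : ¬ q ∣ j) :
    (j : ZMod (q^2))^q * beta q j = (j : ZMod (q^2)) := by
  have h1 : (j : ZMod (q^2))^q * ((j : ZMod (q^2))^q)⁻¹ = 1 :=
    ZMod.mul_inv_of_unit _ ((isUnit_cast hq hj).pow q)
  unfold beta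
  linear_combination (j : ZMod (q^2)) * h1

lemma beta_one {q : ℕ} (hq : q.Prime) {j : ℕ} (hj : ¬ q ∣ j) :
    (q : ZMod (q^2)) ∣ beta q j - 1 := by
  obtain ⟨c, hc⟩ := fermat_dvd hq j
  have h1 : (j : ZMod (q^2))^q * ((j : ZMod (q^2))^q)⁻¹ = 1 :=
    ZMod.mul_inv_of_unit _ ((isUnit_cast hq hj).pow q)
  refine ⟨-c * ((j : ZMod (q^2))^q)⁻¹, ?_⟩
  unfold beta
  linear_combination (-(((j : ZMod (q^2))^q)⁻¹)) * hc + h1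

lemma prod_eq {q : ℕ} (hq : q.Prime) {j l : ℕ} (hj : ¬ q ∣ j) (hl : ¬ q ∣ l) (b : ℤ)
    (h : (((j * l : ℕ) : ℤ) : ZMod q) = (b : ZMod q)) :
    (j : ZMod (q^2)) * (l : ZMod (q^2)) = (b : ZMod (q^2))^q * (beta q j + beta q l - 1) := by
  have h1 : ((((j * l : ℕ) : ℤ) : ZMod (q^2)))^q = ((b : ZMod (q^2)))^q := powq_eq h
  push_cast at h1
  have h2 : beta q j * beta q l = beta q j + beta q l - 1 :=
    mul_eq_add_sub_one (beta_one hq hj) (beta_one hq hl)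
  calc (j : ZMod (q^2)) * (l : ZMod (q^2))
      = ((j : ZMod (q^2))^q * beta q j) * ((l : ZMod (q^2))^q * beta q l) := by
        rw [beta_pow hq hj, beta_pow hq hl]
    _ = ((j : ZMod (q^2)) * (l : ZMod (q^2)))^q * (beta q j * beta q l) := by ring
    _ = (b : ZMod (q^2))^q * (beta q j + beta q l - 1) := by rw [← h2, ← h1, mul_pow]

lemma sum_reindex {q : ℕ} (hq : q.Prime) {M : Type*} [AddCommMonoid M]
    (c : ZMod q) (hc : c ≠ 0) (f : ℕ → M) :
    ∑ j ∈ Finset.Icc 1 (q-1), f ((c * (j : ZMod q)⁻¹).val) = ∑ j ∈ Finset.Icc 1 (q-1), f j := by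
  haveI := Fact.mk hq
  have hq2 := hq.two_le
  have key : ∀ a ∈ Finset.Icc 1 (q-1), (c * (a : ZMod q)⁻¹).val ∈ Finset.Icc 1 (q-1) ∧
      (c * (((c * (a : ZMod q)⁻¹).val : ℕ) : ZMod q)⁻¹).val = a := by
    intro a ha
    rw [Finset.mem_Icc] at ha
    have halt : a < q := by omega
    have hane : (a : ZMod q) ≠ 0 := by
      rw [Ne, ZMod.natCast_eq_zero_iff]
      intro hd
      have := Nat.le_of_dvd (by omega) hd
      omega
    have hne : c * (a : ZMod q)⁻¹ ≠ 0 := mul_ne_zero hc (inv_ne_zero hane)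
    constructor
    · rw [Finset.mem_Icc]
      have h1 : (c * (a : ZMod q)⁻¹).val ≠ 0 := by
        rw [Ne, ZMod.val_eq_zero]; exact hne
      have h2 := ZMod.val_lt (c * (a : ZMod q)⁻¹)
      omega
    · have hcast : (((c * (a : ZMod q)⁻¹).val : ℕ) : ZMod q) = c * (a : ZMod q)⁻¹ := by
        rw [ZMod.natCast_val, ZMod.cast_id]
      rw [hcast, mul_inv_rev, inv_inv]
      have : c * ((a : ZMod q) * c⁻¹) = (a : ZMod q) := by
        field_simp
      rw [this, ZMod.val_cast_of_lt halt]
  refine Finset.sum_nbij' (fun a => (c * (a : ZMod q)⁻¹).val) (fun a => (c * (a : ZMod q)⁻¹).val)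
    (fun a ha => (key a ha).1) (fun a ha => (key a ha).1)
    (fun a ha => (key a ha).2) (fun a ha => (key a ha).2) (fun a _ => rfl)

theorem stmt16 (q : ℕ) (hq : q.Prime) (hodd : Odd q) (k : ℤ) :
    (∑ j ∈ Finset.Icc 1 (q - 1), ∑ l ∈ Finset.Icc 1 (q - 1),
        if ((j : ZMod q) * (l : ZMod q) = (k : ZMod q)) then (j : ℤ) * (l : ℤ) else 0) ≡
      k ^ q * ∑ j ∈ Finset.Icc 1 (q - 1), (j : ℤ) * (jstar q j : ℤ) [ZMOD ((q : ℤ)^2)] := by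
  haveI := Fact.mk hq
  haveI : NeZero (q^2) := ⟨pow_ne_zero 2 hq.pos.ne'⟩
  have hq2 := hq.two_le
  have hnd : ∀ j ∈ Finset.Icc 1 (q-1), ¬ q ∣ j := by
    intro j hj hd
    rw [Finset.mem_Icc] at hj
    have := Nat.le_of_dvd (by omega) hd
    omega
  have hnz : ∀ j ∈ Finset.Icc 1 (q-1), (j : ZMod q) ≠ 0 := by
    intro j hj
    rw [Ne, ZMod.natCast_eq_zero_iff]
    exact hnd j hj
  by_cases hk : ((k : ZMod q) = 0)
  · -- q ∣ k : both sides are ≡ 0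
    have hL : (∑ j ∈ Finset.Icc 1 (q - 1), ∑ l ∈ Finset.Icc 1 (q - 1),
        if ((j : ZMod q) * (l : ZMod q) = (k : ZMod q)) then (j : ℤ) * (l : ℤ) else 0) = 0 := by
      refine Finset.sum_eq_zero fun j hj => Finset.sum_eq_zero fun l hl => ?_
      rw [if_neg]
      intro hcond
      rw [hk, mul_eq_zero] at hcond
      rcases hcond with h | h
      · exact hnz j hj h
      · exact hnz l hl h
    rw [hL]
    have hdvd : (q : ℤ) ∣ k := by rwa [ZMod.intCast_zmod_eq_zero_iff_dvd] at hk
    have h2 : ((q:ℤ)^2) ∣ k^q := by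
      have : k ^ q = k^2 * k^(q-2) := by
        rw [← pow_add]; congr 1; omega
      rw [this]
      exact Dvd.dvd.mul_right (pow_dvd_pow_of_dvd hdvd 2) _
    exact (Int.modEq_zero_iff_dvd.mpr (Dvd.dvd.mul_right h2 _)).symm
  · -- main case
    have hmod : ((q:ℤ)^2) = ((q^2 : ℕ) : ℤ) := by push_cast; ring
    rw [hmod, ← ZMod.intCast_eq_intCast_iff]
    push_cast [apply_ite (fun z : ℤ => (z : ZMod (q^2)))]
    -- collapse the inner sum
    have collapse : ∀ j ∈ Finset.Icc 1 (q-1),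
        (∑ l ∈ Finset.Icc 1 (q-1), if ((j : ZMod q) * (l : ZMod q) = (k : ZMod q))
            then (j : ZMod (q^2)) * (l : ZMod (q^2)) else 0)
          = (j : ZMod (q^2)) * ((((k : ZMod q) * (j : ZMod q)⁻¹).val : ℕ) : ZMod (q^2)) := by
      intro j hj
      have hjne := hnz j hj
      have hLne : ((k : ZMod q) * (j : ZMod q)⁻¹) ≠ 0 := mul_ne_zero hk (inv_ne_zero hjne)
      have hLmem : ((k : ZMod q) * (j : ZMod q)⁻¹).val ∈ Finset.Icc 1 (q-1) := by
        rw [Finset.mem_Icc]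
        have h1 : ((k : ZMod q) * (j : ZMod q)⁻¹).val ≠ 0 := by
          rw [Ne, ZMod.val_eq_zero]; exact hLne
        have h2 := ZMod.val_lt ((k : ZMod q) * (j : ZMod q)⁻¹)
        omega
      rw [Finset.sum_eq_single_of_mem _ hLmem ?_]
      · rw [if_pos]
        rw [ZMod.natCast_val, ZMod.cast_id]
        field_simp
      · intro l hl hlne
        rw [if_neg]
        intro hcond
        apply hlne
        have hlval : (l : ZMod q) = (k : ZMod q) * (j : ZMod q)⁻¹ := by
          rw [← hcond, mul_comm ((j : ZMod q)) ((l : ZMod q)), mul_assoc,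
            mul_inv_cancel₀ hjne, mul_one]
        rw [Finset.mem_Icc] at hl
        have hllt : l < q := by omega
        rw [← ZMod.val_cast_of_lt hllt, hlval]
    rw [Finset.sum_congr rfl collapse]
    -- rewrite LHS terms
    have hLterm : ∀ j ∈ Finset.Icc 1 (q-1),
        (j : ZMod (q^2)) * ((((k : ZMod q) * (j : ZMod q)⁻¹).val : ℕ) : ZMod (q^2))
          = (k : ZMod (q^2))^q *
            (beta q j + beta q (((k : ZMod q) * (j : ZMod q)⁻¹).val) - 1) := by
      intro j hj
      have hjne := hnz j hj
      have hLne : ((k : ZMod q) * (j : ZMod q)⁻¹) ≠ 0 := mul_ne_zero hk (inv_ne_zero hjne)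
      have hLnd : ¬ q ∣ ((k : ZMod q) * (j : ZMod q)⁻¹).val := by
        rw [← ZMod.natCast_eq_zero_iff, ZMod.natCast_val, ZMod.cast_id]
        exact hLne
      refine prod_eq hq (hnd j hj) hLnd k ?_
      push_cast
      rw [ZMod.natCast_val, ZMod.cast_id]
      field_simp
    rw [Finset.sum_congr rfl hLterm]
    -- rewrite RHS terms
    have hRterm : ∀ j ∈ Finset.Icc 1 (q-1),
        (j : ZMod (q^2)) * ((jstar q j : ℕ) : ZMod (q^2))
          = beta q j + beta q (jstar q j) - 1 := by
      intro j hj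
      have hjne := hnz j hj
      have hjsnd : ¬ q ∣ jstar q j := by
        rw [← ZMod.natCast_eq_zero_iff]
        unfold jstar
        rw [ZMod.natCast_val, ZMod.cast_id]
        exact inv_ne_zero hjne
      have h1 : (((j * jstar q j : ℕ) : ℤ) : ZMod q) = ((1 : ℤ) : ZMod q) := by
        push_cast
        unfold jstar
        rw [ZMod.natCast_val, ZMod.cast_id, mul_inv_cancel₀ hjne]
      have := prod_eq hq (hnd j hj) hjsnd 1 h1
      simpa using this
    rw [Finset.sum_congr rfl hRterm]
    rw [← Finset.mul_sum]
    congr 1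
    rw [Finset.sum_sub_distrib, Finset.sum_sub_distrib, Finset.sum_add_distrib,
      Finset.sum_add_distrib]
    congr 2
    have e1 : ∑ j ∈ Finset.Icc 1 (q-1), beta q (((k : ZMod q) * (j : ZMod q)⁻¹).val)
        = ∑ j ∈ Finset.Icc 1 (q-1), beta q j := sum_reindex hq _ hk (beta q)
    have e2 : ∑ j ∈ Finset.Icc 1 (q-1), beta q (jstar q j)
        = ∑ j ∈ Finset.Icc 1 (q-1), beta q j := by
      have := sum_reindex hq (1 : ZMod q) one_ne_zero (beta q)
      simp only [one_mul] at this
      rw [← this]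
      rfl
    rw [e1, e2]
end
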